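/- arXiv:1911.08720 — 6 statements merged into one kernel-verified Lean document; each statement's English description precedes it below -/
import Mathlib

section
/- For integers 1 ≤ k ≤ d, the Euclidean volume of the hypersimplex Δ̃_{k,d} = {(z_1,…,z_{d-1}) ∈ ℝ^{d-1} : 0 ≤ z_1 ≤ 1, 0 ≤ z_i − z_{i-1} ≤ 1 for 2 ≤ i ≤ d-1, and k-1 ≤ z_{d-1} ≤ k} equals A_{k,d-1}/(d-1)!, where A_{k,d-1} is the number of permutations of {1,…,d-1} with exactly k-1 descents. (Here one may take the convention of the paper, with z_0 = 0.) -/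
open MeasureTheory Finset ENNReal

/-- One-line notation value: `ov w i` is `w_i ∈ {1,…,d}` for `1 ≤ i ≤ d`,
and `0` otherwise (in particular `w_0 = 0`). -/
def ov {d : ℕ} (w : Equiv.Perm (Fin d)) (i : ℕ) : ℕ :=
  if h : 1 ≤ i ∧ i ≤ d then (w ⟨i - 1, by omega⟩).val + 1 else 0

/-- Number of descents of the consecutive subword `w_a w_{a+1} ⋯ w_b`. -/
def des {d : ℕ} (w : Equiv.Perm (Fin d)) (a b : ℕ) : ℕ :=
  ((Finset.Ico a b).filter (fun ℓ => ov w (ℓ + 1) < ov w ℓ)).card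

/-- `zcoord z i` is the `i`-th coordinate `z_i` (1-based), with `z_0 = 0`. -/
noncomputable def zcoord {m : ℕ} (z : Fin m → ℝ) (i : ℕ) : ℝ :=
  if h : 1 ≤ i ∧ i ≤ m then z ⟨i - 1, by omega⟩ else 0

/-- `Ycoord y i` is the 0-indexed coordinate `y_i`. -/
noncomputable def Ycoord {d : ℕ} (y : Fin d → ℝ) (i : ℕ) : ℝ :=
  if h : i < d then y ⟨i, h⟩ else 0

/-!
Stanley's decomposition. For a point `z` of the hypersimplex in general position, let `y` be the
vector of fractional parts of `z` and `w` the permutation ranking the entries of `y`. Each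
increment `z_i - z_{i-1} ∈ [0, 1]` is `y_i - y_{i-1}` plus an integer, and that integer is forced
to be `1` when `y_i < y_{i-1}` (a descent of `w`) and `0` otherwise. Hence `⌊z_i⌋` counts the
descents of `w` among its first `i` letters, and `k - 1 ≤ z_m ≤ k` says that `w` has `k - 1`
descents; conversely, the translate of the order chamber of such a `w` by its descent counts lies
in the hypersimplex. So up to a null set the hypersimplex is the disjoint union of these
translates, and each has volume `1 / m!` because the `m!` order chambers are congruent and tile
the unit cube up to a null set.
-/

theorem MeasureTheory.Measure.addHaar_preimage_countable_of_linearMap_ne_zero {E : Type*}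
    [NormedAddCommGroup E] [NormedSpace ℝ E] [MeasurableSpace E] [BorelSpace E]
    [FiniteDimensional ℝ E] (μ : Measure E) [μ.IsAddHaarMeasure] {L : E →ₗ[ℝ] ℝ} (hL : L ≠ 0)
    {S : Set ℝ} (hS : S.Countable) : μ (L ⁻¹' S) = 0 := by
  obtain ⟨u, hu⟩ : ∃ u, L u ≠ 0 := by
    by_contra! h
    exact hL (LinearMap.ext h)
  rw [← Set.biUnion_of_singleton S, Set.preimage_iUnion₂]
  refine (measure_biUnion_null_iff hS).2 fun s _ => ?_
  have hfiber : L ⁻¹' {s} = AffineSubspace.mk' ((s / L u) • u) (LinearMap.ker L) := by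
    ext z
    simp [AffineSubspace.mem_mk', sub_eq_zero, hu]
  rw [hfiber]
  refine Measure.addHaar_affineSubspace μ _ fun htop => hL ?_
  simpa using congrArg AffineSubspace.direction htop

def intGenericPoints (m : ℕ) : Set (Fin m → ℝ) :=
  {z | (∀ j, Int.fract (z j) ≠ 0) ∧ Function.Injective fun j => Int.fract (z j)}

theorem volume_compl_intGenericPoints (m : ℕ) : volume (intGenericPoints m)ᶜ = 0 := by
  have hZ : (Set.range ((↑) : ℤ → ℝ)).Countable := Set.countable_range _
  let π : Fin m → (Fin m → ℝ) →ₗ[ℝ] ℝ := LinearMap.proj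
  have hsub : (intGenericPoints m)ᶜ ⊆ (⋃ j, π j ⁻¹' Set.range ((↑) : ℤ → ℝ)) ∪
      ⋃ i, ⋃ j, ⋃ (_ : i ≠ j), (π i - π j) ⁻¹' Set.range ((↑) : ℤ → ℝ) := by
    intro z hz
    simp only [intGenericPoints, Set.mem_compl_iff, Set.mem_ofPred_eq, not_and_or, not_forall,
      not_not, Function.Injective] at hz
    rcases hz with ⟨j, hj⟩ | ⟨i, j, hij, hne⟩
    · exact Or.inl (Set.mem_iUnion.2 ⟨j, Int.fract_eq_zero_iff.1 hj⟩)
    · obtain ⟨n, hn⟩ := Int.fract_eq_fract.1 hij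
      exact Or.inr (Set.mem_iUnion₂.2 ⟨i, j, Set.mem_iUnion.2 ⟨hne, n, by simp [π, hn]⟩⟩)
  refine measure_mono_null hsub (measure_union_null ?_ ?_)
  · refine measure_iUnion_null fun j => ?_
    refine Measure.addHaar_preimage_countable_of_linearMap_ne_zero _ (fun h => ?_) hZ
    simpa [π] using LinearMap.congr_fun h (Pi.single j 1)
  · refine measure_iUnion_null fun i => measure_iUnion_null fun j =>
      measure_iUnion_null fun hij => ?_
    refine Measure.addHaar_preimage_countable_of_linearMap_ne_zero _ (fun h => ?_) hZ
    simpa [π, Pi.single_eq_of_ne hij.symm] using LinearMap.congr_fun h (Pi.single i 1)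

theorem MeasureTheory.measure_eq_of_inter_conull_subset {α : Type*} [MeasurableSpace α]
    {μ : Measure α} {s t u : Set α} (hu : μ uᶜ = 0) (hst : s ∩ u ⊆ t) (hts : t ⊆ s) :
    μ t = μ s :=
  le_antisymm (measure_mono hts) ((measure_inter_conull hu).symm.le.trans (measure_mono hst))

def orderChamber {m : ℕ} (w : Equiv.Perm (Fin m)) : Set (Fin m → ℝ) :=
  {y | (∀ j, y j ∈ Set.Ioo 0 1) ∧ StrictMono (y ∘ w.symm)}

namespace orderChamber

variable {m : ℕ} {w w' : Equiv.Perm (Fin m)} {y : Fin m → ℝ}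

theorem lt_iff (hy : y ∈ orderChamber w) (i j : Fin m) : y i < y j ↔ w i < w j := by
  simpa using hy.2.lt_iff_lt (a := w i) (b := w j)

theorem injective_of_mem (hy : y ∈ orderChamber w) : Function.Injective y := by
  simpa using hy.2.injective.comp w.injective

theorem eq_of_mem (hy : y ∈ orderChamber w) (hy' : y ∈ orderChamber w') : w = w' := by
  have h := Tuple.unique_monotone hy.2.monotone hy'.2.monotone
  exact Equiv.symm_bijective.injective
    (DFunLike.coe_injective ((injective_of_mem hy).comp_left h))

theorem pairwise_disjoint : Pairwise fun w w' : Equiv.Perm (Fin m) =>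
    Disjoint (orderChamber w) (orderChamber w') :=
  fun _ _ hne => Set.disjoint_left.2 fun _ hy hy' => hne (eq_of_mem hy hy')

theorem exists_mem (hy : ∀ j, y j ∈ Set.Ioo 0 1) (hinj : Function.Injective y) :
    ∃ w, y ∈ orderChamber w :=
  ⟨(Tuple.sort y).symm, hy, by
    simpa using (Tuple.monotone_sort y).strictMono_of_injective
      (hinj.comp (Tuple.sort y).injective)⟩

theorem measurableSet (w : Equiv.Perm (Fin m)) : MeasurableSet (orderChamber w) := by
  have h : orderChamber w = (⋂ j, (fun y : Fin m → ℝ => y j) ⁻¹' Set.Ioo 0 1) ∩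
      ⋂ i, ⋂ j, ⋂ (_ : i < j), {y | y (w.symm i) < y (w.symm j)} := by
    ext y
    simp [orderChamber, StrictMono]
  rw [h]
  exact (MeasurableSet.iInter fun j => measurableSet_Ioo.preimage (measurable_pi_apply j)).inter
    (MeasurableSet.iInter fun i => .iInter fun j => .iInter fun _ =>
      measurableSet_lt (measurable_pi_apply _) (measurable_pi_apply _))

theorem volume_eq_volume_one (w : Equiv.Perm (Fin m)) :
    volume (orderChamber w) = volume (orderChamber (1 : Equiv.Perm (Fin m))) := by
  have hmp := volume_preserving_arrowCongr' (w : Fin m ≃ Fin m) (MeasurableEquiv.refl ℝ)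
    (MeasurePreserving.id _)
  have hpre : orderChamber w = MeasurableEquiv.arrowCongr' (w : Fin m ≃ Fin m)
      (MeasurableEquiv.refl ℝ) ⁻¹' orderChamber 1 := by
    ext y
    have happ : ∀ j, MeasurableEquiv.arrowCongr' (w : Fin m ≃ Fin m) (MeasurableEquiv.refl ℝ) y j
        = y (w.symm j) := fun _ => rfl
    simp only [orderChamber, Set.mem_preimage, Set.mem_ofPred_eq, happ]
    exact and_congr (w.symm.forall_congr_right).symm Iff.rfl
  rw [hpre, hmp.measure_preimage (measurableSet 1).nullMeasurableSet]

theorem volume_eq (w : Equiv.Perm (Fin m)) :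
    volume (orderChamber w) = (m.factorial : ℝ≥0∞)⁻¹ := by
  set cube := {y : Fin m → ℝ | ∀ j, y j ∈ Set.Ioo 0 1}
  have hcube : volume cube = 1 := by
    have : cube = Set.univ.pi fun _ => Set.Ioo 0 1 := by ext; simp [cube]
    simp [this, volume_pi_pi, Real.volume_Ioo]
  have hcover : volume (⋃ v : Equiv.Perm (Fin m), orderChamber v) = volume cube := by
    refine measure_eq_of_inter_conull_subset (volume_compl_intGenericPoints m) ?_
      (Set.iUnion_subset fun w' y hy => hy.1)
    rintro y ⟨hy, -, hinj⟩
    have hfract : (fun j => Int.fract (y j)) = y :=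
      funext fun j => Int.fract_eq_self.2 ⟨(hy j).1.le, (hy j).2⟩
    rw [hfract] at hinj
    exact Set.mem_iUnion.2 (exists_mem hy hinj)
  rw [measure_iUnion pairwise_disjoint measurableSet, tsum_fintype,
    Finset.sum_congr rfl fun w' _ => volume_eq_volume_one w', sum_const, card_univ,
    Fintype.card_perm, Fintype.card_fin, nsmul_eq_mul, hcube, mul_comm] at hcover
  rw [volume_eq_volume_one, ENNReal.eq_inv_of_mul_eq_one_left hcover]

end orderChamber

section zcoord

variable {m : ℕ}

@[simp] theorem zcoord_zero (z : Fin m → ℝ) : zcoord z 0 = 0 := by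
  simp [zcoord]

theorem zcoord_succ (z : Fin m → ℝ) {i : ℕ} (hi : i < m) : zcoord z (i + 1) = z ⟨i, hi⟩ := by
  simp [zcoord, hi]

theorem zcoord_add (y c : Fin m → ℝ) (i : ℕ) : zcoord (y + c) i = zcoord y i + zcoord c i := by
  unfold zcoord
  split_ifs <;> simp

theorem zcoord_mem_Ico {y : Fin m → ℝ} (hy : ∀ j, y j ∈ Set.Ico 0 1) (i : ℕ) :
    zcoord y i ∈ Set.Ico 0 1 := by
  unfold zcoord
  split_ifs
  · exact hy _
  · simp

theorem exists_zcoord_eq_add_intCast (z : Fin m → ℝ) (i : ℕ) :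
    ∃ n : ℤ, zcoord z i = zcoord (fun j => Int.fract (z j)) i + n := by
  unfold zcoord
  split_ifs
  · exact ⟨_, (Int.fract_add_floor _).symm⟩
  · exact ⟨0, by simp⟩

end zcoord

section descents

variable {m : ℕ} (w : Equiv.Perm (Fin m))

@[simp] theorem ov_zero : ov w 0 = 0 := by
  simp [ov]

theorem ov_succ {i : ℕ} (hi : i < m) : ov w (i + 1) = w ⟨i, hi⟩ + 1 := by
  simp [ov, hi]

theorem des_one_succ (i : ℕ) :
    des w 1 (i + 1) = des w 1 i + if ov w (i + 1) < ov w i then 1 else 0 := by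
  rcases i.eq_zero_or_pos with rfl | hi
  · simp [des]
  · rw [des, des, Nat.Ico_succ_right_eq_insert_Ico hi, filter_insert]
    split_ifs <;> simp

noncomputable def descentVector : Fin m → ℝ := fun j => des w 1 (j + 1)

theorem zcoord_descentVector {i : ℕ} (hi : i ≤ m) : zcoord (descentVector w) i = des w 1 i := by
  rcases i with _ | i
  · simp [des]
  · simp [zcoord_succ _ hi, descentVector]

end descents

theorem sub_add_intCast_mem_Icc_iff {a b : ℝ} (ha : a ∈ Set.Ico 0 1) (hb : b ∈ Set.Ico 0 1)
    (hab : a ≠ b) (n : ℤ) : b - a + n ∈ Set.Icc 0 1 ↔ n = if b < a then 1 else 0 := by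
  obtain ⟨ha0, ha1⟩ := ha
  obtain ⟨hb0, hb1⟩ := hb
  rw [Set.mem_Icc]
  split_ifs with hba
  · refine ⟨fun ⟨h0, h1⟩ => ?_, fun hn => ?_⟩
    · have hpos : 0 < n := by exact_mod_cast (by linarith : (0 : ℝ) < n)
      have hlt : n < 2 := by exact_mod_cast (by linarith : (n : ℝ) < 2)
      omega
    · subst hn
      constructor <;> push_cast <;> linarith
  · have hab' : a < b := lt_of_le_of_ne (not_lt.1 hba) hab
    refine ⟨fun ⟨h0, h1⟩ => ?_, fun hn => ?_⟩
    · have hpos : -1 < n := by exact_mod_cast (by linarith : (-1 : ℝ) < n)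
      have hlt : n < 1 := by exact_mod_cast (by linarith : (n : ℝ) < 1)
      omega
    · subst hn
      constructor <;> push_cast <;> linarith

section chamber

variable {m : ℕ} {w : Equiv.Perm (Fin m)} {y : Fin m → ℝ}

-- Position `0` is the minimum on both sides: `ov w 0 = 0` and `zcoord y 0 = 0 < y j`.
theorem ov_lt_ov_iff_of_mem_orderChamber (hy : y ∈ orderChamber w) {i i' : ℕ} (hi : i ≤ m)
    (hi' : i' ≤ m) : ov w i < ov w i' ↔ zcoord y i < zcoord y i' := by
  rcases i with _ | i <;> rcases i' with _ | i'
  · simp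
  · simp [ov_succ w hi', zcoord_succ y hi', (hy.1 _).1]
  · simp [ov_succ w hi, zcoord_succ y hi, (hy.1 _).1.le]
  · rw [ov_succ w hi, ov_succ w hi', zcoord_succ y hi, zcoord_succ y hi',
      orderChamber.lt_iff hy, Fin.lt_def, Nat.add_lt_add_iff_right]

theorem des_one_succ_of_mem_orderChamber (hy : y ∈ orderChamber w) {i : ℕ} (hi : i < m) :
    (des w 1 (i + 1) : ℤ) = des w 1 i + if zcoord y (i + 1) < zcoord y i then 1 else 0 := by
  simp only [des_one_succ, ov_lt_ov_iff_of_mem_orderChamber hy hi hi.le]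
  split_ifs <;> simp

theorem zcoord_ne_zcoord_succ_of_mem_orderChamber (hy : y ∈ orderChamber w) {i : ℕ}
    (hi : i < m) : zcoord y i ≠ zcoord y (i + 1) := by
  rcases i with _ | i
  · simpa [zcoord_succ y hi] using (hy.1 _).1.ne
  · rw [zcoord_succ y (by omega), zcoord_succ y hi]
    exact (orderChamber.injective_of_mem hy).ne (by simp)

end chamber

def hypersimplex (m k : ℕ) : Set (Fin m → ℝ) :=
  {z | (∀ i, 1 ≤ i → i ≤ m →
      0 ≤ zcoord z i - zcoord z (i - 1) ∧ zcoord z i - zcoord z (i - 1) ≤ 1) ∧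
    ((k : ℝ) - 1 ≤ zcoord z m ∧ zcoord z m ≤ (k : ℝ))}

def descentChamber {m : ℕ} (w : Equiv.Perm (Fin m)) : Set (Fin m → ℝ) :=
  {z | z - descentVector w ∈ orderChamber w}

namespace descentChamber

variable {m : ℕ} {w : Equiv.Perm (Fin m)}

theorem measurableSet (w : Equiv.Perm (Fin m)) : MeasurableSet (descentChamber w) :=
  (orderChamber.measurableSet w).preimage (measurable_id.sub_const _)

theorem volume_eq (w : Equiv.Perm (Fin m)) :
    volume (descentChamber w) = (m.factorial : ℝ≥0∞)⁻¹ := by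
  change volume ((· + -descentVector w) ⁻¹' orderChamber w) = _
  rw [measure_preimage_add_right, orderChamber.volume_eq]

theorem descentVector_eq_floor {z : Fin m → ℝ} (hz : z ∈ descentChamber w) (j : Fin m) :
    descentVector w j = ⌊z j⌋ := by
  have h := hz.1 j
  simp only [descentVector, Pi.sub_apply, Set.mem_Ioo] at h
  have hfloor : ⌊z j⌋ = (des w 1 (j + 1) : ℤ) :=
    Int.floor_eq_iff.2 ⟨by push_cast; linarith, by push_cast; linarith⟩
  simp [hfloor, descentVector]

theorem pairwise_disjoint : Pairwise fun w w' : Equiv.Perm (Fin m) =>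
    Disjoint (descentChamber w) (descentChamber w') := by
  intro w w' hne
  refine Set.disjoint_left.2 fun z hz hz' => hne (orderChamber.eq_of_mem hz ?_)
  have hc : descentVector w = descentVector w' :=
    funext fun j => (descentVector_eq_floor hz j).trans (descentVector_eq_floor hz' j).symm
  simpa [descentChamber, hc] using hz'

end descentChamber

section inclusions

variable {m k : ℕ}

theorem descentChamber_subset_hypersimplex (hk : 1 ≤ k) {w : Equiv.Perm (Fin m)}
    (hw : des w 1 m = k - 1) : descentChamber w ⊆ hypersimplex m k := by
  intro z hz
  set y := z - descentVector w
  have hY : ∀ i, zcoord y i ∈ Set.Ico 0 1 :=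
    zcoord_mem_Ico fun j => Set.Ioo_subset_Ico_self (hz.1 j)
  have hzy : ∀ i ≤ m, zcoord z i = zcoord y i + des w 1 i := fun i hi => by
    rw [← zcoord_descentVector w hi, ← zcoord_add, sub_add_cancel]
  refine ⟨fun i hi1 him => ?_, ?_⟩
  · obtain ⟨i, rfl⟩ : ∃ n, i = n + 1 := ⟨i - 1, by omega⟩
    have hstep : (des w 1 (i + 1) : ℝ) = des w 1 i +
        ((if zcoord y (i + 1) < zcoord y i then 1 else 0 : ℤ) : ℝ) := by
      exact_mod_cast des_one_succ_of_mem_orderChamber hz him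
    have key := (sub_add_intCast_mem_Icc_iff (hY i) (hY (i + 1))
      (zcoord_ne_zcoord_succ_of_mem_orderChamber hz him) _).2 rfl
    rw [Nat.add_sub_cancel, hzy _ him, hzy i (by omega), hstep, ← Set.mem_Icc]
    convert key using 1
    ring
  · rw [hzy m le_rfl, hw, Nat.cast_sub hk, Nat.cast_one]
    constructor <;> linarith [(hY m).1, (hY m).2]

theorem zcoord_eq_zcoord_fract_add_des {z : Fin m → ℝ} {w : Equiv.Perm (Fin m)}
    (hstep : ∀ i, 1 ≤ i → i ≤ m →
      0 ≤ zcoord z i - zcoord z (i - 1) ∧ zcoord z i - zcoord z (i - 1) ≤ 1)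
    (hw : (fun j => Int.fract (z j)) ∈ orderChamber w) {i : ℕ} (hi : i ≤ m) :
    zcoord z i = zcoord (fun j => Int.fract (z j)) i + des w 1 i := by
  set y : Fin m → ℝ := fun j => Int.fract (z j)
  have hY : ∀ i, zcoord y i ∈ Set.Ico 0 1 :=
    zcoord_mem_Ico fun j => Set.Ioo_subset_Ico_self (hw.1 j)
  induction i with
  | zero => simp [des]
  | succ i ih =>
    obtain ⟨n, hn⟩ : ∃ n : ℤ, zcoord z (i + 1) = zcoord y (i + 1) + n :=
      exists_zcoord_eq_add_intCast z (i + 1)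
    have h := hstep (i + 1) (by omega) hi
    rw [Nat.add_sub_cancel, hn, ih (by omega), ← Set.mem_Icc] at h
    have hjump := (sub_add_intCast_mem_Icc_iff (hY i) (hY (i + 1))
      (zcoord_ne_zcoord_succ_of_mem_orderChamber hw hi) (n - des w 1 i)).1
      (by convert h using 1; push_cast; ring)
    have hdes := des_one_succ_of_mem_orderChamber hw hi
    rw [hn, (by omega : n = des w 1 (i + 1)), Int.cast_natCast]

theorem hypersimplex_inter_subset (hk : 1 ≤ k) :
    hypersimplex m k ∩ intGenericPoints m ⊆
      ⋃ w ∈ univ.filter fun w : Equiv.Perm (Fin m) => des w 1 m = k - 1, descentChamber w := by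
  rintro z ⟨⟨hstep, htop⟩, hne, hinj⟩
  set y : Fin m → ℝ := fun j => Int.fract (z j)
  have hy01 : ∀ j, y j ∈ Set.Ioo 0 1 :=
    fun j => ⟨(Int.fract_nonneg _).lt_of_ne' (hne j), Int.fract_lt_one _⟩
  obtain ⟨w, hw⟩ := orderChamber.exists_mem hy01 hinj
  have hzy {i : ℕ} (hi : i ≤ m) := zcoord_eq_zcoord_fract_add_des hstep hw hi
  have hdes : des w 1 m = k - 1 := by
    rw [hzy le_rfl] at htop
    rcases m.eq_zero_or_pos with rfl | hm
    · simp only [zcoord_zero, des, Ico_eq_empty_of_le zero_le_one, filter_empty, card_empty,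
        Nat.cast_zero, add_zero] at htop ⊢
      have : k ≤ 1 := by exact_mod_cast (by linarith : (k : ℝ) ≤ 1)
      omega
    · obtain ⟨i, rfl⟩ : ∃ i, m = i + 1 := ⟨m - 1, by omega⟩
      rw [zcoord_succ y (Nat.lt_succ_self i)] at htop
      have hlt : des w 1 (i + 1) < k := by
        exact_mod_cast (by linarith [(hy01 ⟨i, by omega⟩).1] : (des w 1 (i + 1) : ℝ) < k)
      have hgt : k < des w 1 (i + 1) + 2 := by
        exact_mod_cast (by linarith [(hy01 ⟨i, by omega⟩).2] : (k : ℝ) < des w 1 (i + 1) + 2)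
      omega
  refine Set.mem_biUnion (by simpa using hdes) ?_
  show z - descentVector w ∈ orderChamber w
  convert hw using 1
  funext j
  have h := hzy j.isLt
  rw [zcoord_succ z j.isLt, zcoord_succ y j.isLt] at h
  simp [descentVector, h]

end inclusions

theorem stmt4_general (k m : ℕ) (hk : 1 ≤ k) :
    volume {z : Fin m → ℝ |
      (∀ i, 1 ≤ i → i ≤ m →
        0 ≤ zcoord z i - zcoord z (i - 1) ∧ zcoord z i - zcoord z (i - 1) ≤ 1) ∧
      ((k : ℝ) - 1 ≤ zcoord z m ∧ zcoord z m ≤ (k : ℝ))} =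
    (Nat.card {w : Equiv.Perm (Fin m) // des w 1 m = k - 1} : ℝ≥0∞) /
      (Nat.factorial m : ℝ≥0∞) := by
  change volume (hypersimplex m k) = _
  rw [← measure_eq_of_inter_conull_subset (volume_compl_intGenericPoints m)
      (hypersimplex_inter_subset hk) (Set.iUnion₂_subset fun w hw =>
        descentChamber_subset_hypersimplex hk (Finset.mem_filter.1 hw).2),
    measure_biUnion_finset (fun w _ w' _ hne => descentChamber.pairwise_disjoint hne)
      (fun w _ => descentChamber.measurableSet w)]
  simp_rw [descentChamber.volume_eq, sum_const, nsmul_eq_mul, Nat.card_eq_fintype_card,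
    Fintype.card_subtype, div_eq_mul_inv]

theorem stmt4 (d k m : ℕ) (hk : 1 ≤ k) (hkd : k ≤ d) (hm : d = m + 1) :
    volume {z : Fin m → ℝ |
      (∀ i, 1 ≤ i → i ≤ m →
        0 ≤ zcoord z i - zcoord z (i - 1) ∧ zcoord z i - zcoord z (i - 1) ≤ 1) ∧
      ((k : ℝ) - 1 ≤ zcoord z m ∧ zcoord z m ≤ (k : ℝ))} =
    (Nat.card {w : Equiv.Perm (Fin m) // des w 1 m = k - 1} : ℝ≥0∞) /
      (Nat.factorial m : ℝ≥0∞) :=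
  stmt4_general k m hk
end

section
/- For every integer t ≥ 2, the Euclidean volume of the polytope {(y_0, y_1, …, y_{t-1}, y') ∈ ℝ^{t+1} : −1 ≤ y_i ≤ 0 for all i, −1 ≤ y' ≤ 0, and −1 ≤ y' + y_0 − y_i ≤ 0 for all 1 ≤ i ≤ t−1} equals 2/(t+1). -/
open MeasureTheory Finset ENNReal

/-! Put `s = y₀ + y_t`. The constraints say exactly that each of `y₀, …, y_{t-1}` lies in
`[-1, 0] ∩ [s, s + 1]` (for `y₀` this is the condition `-1 ≤ y_t ≤ 0`), an interval of
length `1 - |s + 1|`. The shear `y ↦ (y₀, …, y_{t-1}, s)` preserves volume, so by Fubini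
the volume is `∫_{-2}^0 (1 - |s + 1|)^t ds = 2 / (t + 1)`. -/

theorem measurableSet_setOf_forall_mem_Icc {α ι : Type*} [MeasurableSpace α] [Countable ι]
    {l u : α → ℝ} (hl : Measurable l) (hu : Measurable u) :
    MeasurableSet {q : (ι → ℝ) × α | ∀ j, q.1 j ∈ Set.Icc (l q.2) (u q.2)} := by
  simp only [Set.ofPred_forall, Set.mem_Icc, Set.ofPred_and]
  exact .iInter fun j => (measurableSet_le (by fun_prop) (by fun_prop)).inter
    (measurableSet_le (by fun_prop) (by fun_prop))

theorem volume_prod_setOf_forall_mem_Icc {α ι : Type*} [MeasurableSpace α] [Fintype ι]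
    (μ : Measure α) [SFinite μ] {l u : α → ℝ} (hl : Measurable l) (hu : Measurable u) :
    (volume.prod μ) {q : (ι → ℝ) × α | ∀ j, q.1 j ∈ Set.Icc (l q.2) (u q.2)} =
      ∫⁻ a, ENNReal.ofReal (u a - l a) ^ Fintype.card ι ∂μ := by
  rw [Measure.prod_apply_symm (measurableSet_setOf_forall_mem_Icc hl hu)]
  refine lintegral_congr fun a => ?_
  have hfiber : (fun x : ι → ℝ => (x, a)) ⁻¹' {q | ∀ j, q.1 j ∈ Set.Icc (l q.2) (u q.2)} =
      Set.univ.pi fun _ => Set.Icc (l a) (u a) := by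
    ext x
    simp only [Set.mem_preimage, Set.mem_ofPred_eq, Set.mem_univ_pi]
  rw [hfiber, volume_pi_pi]
  simp [Real.volume_Icc]

/-- The length of `[-1, 0] ∩ [s, s + 1]` when it is nonempty, i.e. `1 - |s + 1|`. -/
def tent (s : ℝ) : ℝ := min 0 (s + 1) - max (-1) s

theorem continuous_tent : Continuous tent := by
  unfold tent
  fun_prop

theorem tent_nonneg {s : ℝ} (hs : s ∈ Set.Icc (-2) 0) : 0 ≤ tent s :=
  sub_nonneg.2 <|
    max_le (le_min (by linarith [hs.2]) (by linarith [hs.1])) (le_min hs.2 (by linarith))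

theorem tent_nonpos {s : ℝ} (hs : s ∉ Set.Icc (-2) 0) : tent s ≤ 0 := by
  rw [Set.mem_Icc, not_and_or, not_le, not_le] at hs
  unfold tent
  rcases hs with hs | hs
  · linarith [min_le_right 0 (s + 1), le_max_left (-1) s]
  · linarith [min_le_left 0 (s + 1), le_max_right (-1) s]

theorem integral_tent_pow (n : ℕ) : ∫ s in (-2 : ℝ)..0, tent s ^ n = 2 / (n + 1) := by
  have hint : ∀ a b, IntervalIntegrable (fun s => tent s ^ n) volume a b :=
    (continuous_tent.pow n).intervalIntegrable
  rw [← intervalIntegral.integral_add_adjacent_intervals (b := -1) (hint _ _) (hint _ _)]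
  have left : ∫ s in (-2 : ℝ)..(-1), tent s ^ n = 1 / (n + 1) := by
    rw [intervalIntegral.integral_congr (g := fun s => (s + 2) ^ n),
      intervalIntegral.integral_comp_add_right (fun s => s ^ n)]
    · norm_num
    · intro s hs
      rw [Set.uIcc_of_le (by norm_num)] at hs
      simp only [tent, min_eq_right (by linarith [hs.2] : s + 1 ≤ 0), max_eq_left hs.2]
      ring
  have right : ∫ s in (-1 : ℝ)..0, tent s ^ n = 1 / (n + 1) := by
    rw [intervalIntegral.integral_congr (g := fun s => (-s) ^ n),
      intervalIntegral.integral_comp_neg (fun s => s ^ n)]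
    · norm_num
    · intro s hs
      rw [Set.uIcc_of_le (by norm_num)] at hs
      simp only [tent, min_eq_left (by linarith [hs.1] : (0 : ℝ) ≤ s + 1), max_eq_right hs.1]
      ring
  rw [left, right]
  ring

theorem lintegral_ofReal_tent_pow {n : ℕ} (hn : n ≠ 0) :
    ∫⁻ s, ENNReal.ofReal (tent s) ^ n = 2 / (n + 1) := by
  have hsupp : (fun s => ENNReal.ofReal (tent s) ^ n) =
      (Set.Icc (-2) 0).indicator fun s => ENNReal.ofReal (tent s ^ n) := by
    ext s
    by_cases hs : s ∈ Set.Icc (-2 : ℝ) 0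
    · rw [Set.indicator_of_mem hs, ENNReal.ofReal_pow (tent_nonneg hs)]
    · rw [Set.indicator_of_notMem hs, ENNReal.ofReal_of_nonpos (tent_nonpos hs),
        zero_pow hn]
  rw [hsupp, lintegral_indicator measurableSet_Icc, ← ofReal_integral_eq_lintegral_ofReal,
    integral_Icc_eq_integral_Ioc, ← intervalIntegral.integral_of_le (by norm_num),
    integral_tent_pow, ENNReal.ofReal_div_of_pos (by positivity)]
  · norm_cast
  · exact (continuous_tent.pow n).integrableOn_Icc
  · filter_upwards [ae_restrict_mem measurableSet_Icc] with s hs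
    exact pow_nonneg (tent_nonneg hs) n

def shear (n : ℕ) (y : Fin (n + 2) → ℝ) : (Fin (n + 1) → ℝ) × ℝ :=
  (Fin.init y, y 0 + y (Fin.last _))

theorem measurePreserving_shear (n : ℕ) : MeasurePreserving (shear n) := by
  have hsplit := volume_preserving_piFinSuccAbove (fun _ : Fin (n + 2) => ℝ) (Fin.last _)
  have hskew : MeasurePreserving fun p : (Fin (n + 1) → ℝ) × ℝ => (p.1, p.1 0 + p.2) :=
    (MeasurePreserving.id volume).skew_product
      (g := fun (x : Fin (n + 1) → ℝ) (b : ℝ) => x 0 + b) (by fun_prop)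
      (.of_forall fun x => map_add_left_eq_self volume (x 0))
  convert (hskew.comp Measure.measurePreserving_swap).comp hsplit using 1
  ext y <;> simp [shear, Fin.init, MeasurableEquiv.piFinSuccAbove]

theorem Ycoord_of_lt {d : ℕ} (y : Fin d → ℝ) {i : ℕ} (h : i < d) : Ycoord y i = y ⟨i, h⟩ :=
  dif_pos h

def fSignatureCell (t : ℕ) : Set (Fin (t + 1) → ℝ) :=
  {y | (∀ i, -1 ≤ y i ∧ y i ≤ 0) ∧
    ∀ i, 1 ≤ i → i ≤ t - 1 →
      -1 ≤ Ycoord y t + Ycoord y 0 - Ycoord y i ∧ Ycoord y t + Ycoord y 0 - Ycoord y i ≤ 0}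

theorem fSignatureCell_eq_preimage_shear (n : ℕ) :
    fSignatureCell (n + 1) =
      shear n ⁻¹' {q | ∀ j, q.1 j ∈ Set.Icc (max (-1) q.2) (min 0 (q.2 + 1))} := by
  ext y
  have hlast : Ycoord y (n + 1) = y (Fin.last _) := Ycoord_of_lt y (by omega)
  have hzero : Ycoord y 0 = y 0 := Ycoord_of_lt y (by omega)
  simp only [fSignatureCell, shear, Set.mem_preimage, Set.mem_ofPred_eq, Set.mem_Icc,
    max_le_iff, le_min_iff, Fin.init, hlast, hzero, add_tsub_cancel_right]
  constructor
  · rintro ⟨hbox, hmid⟩ j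
    obtain ⟨hj1, hj2⟩ := hbox j.castSucc
    cases j using Fin.cases with
    | zero =>
      have := hbox (Fin.last _)
      refine ⟨⟨hj1, ?_⟩, hj2, ?_⟩ <;> simp only [Fin.castSucc_zero] <;> linarith
    | succ j =>
      have hj : Ycoord y (j + 1) = y j.succ.castSucc := Ycoord_of_lt y (by omega)
      have := hmid (j + 1) (by omega) (by omega)
      rw [hj] at this
      exact ⟨⟨hj1, by linarith [this.2]⟩, hj2, by linarith [this.1]⟩
  · intro h
    refine ⟨fun i => ?_, fun i hi1 hi2 => ?_⟩
    · cases i using Fin.lastCases with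
      | last =>
        have := h 0
        simp only [Fin.castSucc_zero] at this
        constructor <;> linarith
      | cast j => exact ⟨(h j).1.1, (h j).2.1⟩
    · have := h ⟨i, by omega⟩
      simp only [Fin.castSucc_mk] at this
      rw [Ycoord_of_lt y (by omega)]
      exact ⟨by linarith [this.2.2], by linarith [this.1.2]⟩

theorem volume_fSignatureCell {t : ℕ} (ht : 1 ≤ t) :
    volume (fSignatureCell t) = 2 / ((t : ℝ≥0∞) + 1) := by
  obtain ⟨n, rfl⟩ : ∃ n, t = n + 1 := ⟨t - 1, by omega⟩
  have hl : Measurable fun s : ℝ => max (-1) s := by fun_prop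
  have hu : Measurable fun s : ℝ => min 0 (s + 1) := by fun_prop
  rw [fSignatureCell_eq_preimage_shear, (measurePreserving_shear n).measure_preimage
      (measurableSet_setOf_forall_mem_Icc hl hu).nullMeasurableSet,
    Measure.volume_eq_prod, volume_prod_setOf_forall_mem_Icc volume hl hu,
    Fintype.card_fin]
  exact lintegral_ofReal_tent_pow n.succ_ne_zero

theorem stmt9 (t : ℕ) (ht : 2 ≤ t) :
    volume {y : Fin (t + 1) → ℝ |
      (∀ i, -1 ≤ y i ∧ y i ≤ 0) ∧
      ∀ i, 1 ≤ i → i ≤ t - 1 →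
        -1 ≤ Ycoord y t + Ycoord y 0 - Ycoord y i ∧
        Ycoord y t + Ycoord y 0 - Ycoord y i ≤ 0} =
    2 / ((t : ℝ≥0∞) + 1) :=
  volume_fSignatureCell (by omega)
end

section
/- For integers t ≥ 2, p ≥ 0, q > 0 with p + q = t − 1, the Euclidean volume of the polytope {(y', y_1,…,y_t) ∈ ℝ^{t+1} : −1 ≤ y' ≤ 0, −1 ≤ y_i ≤ 0 for all i, c_i − 1 ≤ y' + y_t − y_i ≤ c_i for 1 ≤ i ≤ t−1}, where (c_1,…,c_{t-1}) = (0,…,0,1,…,1) with p zeros followed by q ones, equals 1/(binom(t,q)·(t+1)) = q!(t−q)!/(t+1)!. -/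
open MeasureTheory Finset ENNReal

/-!
Write `s = y' + y_t`. For `(y', y_t) ∈ [-1, 0]²` each middle coordinate `y_i` ranges over
`[-1, 0] ∩ [s - c_i, s - c_i + 1]`, of length `-s` if `c_i = 0` and `s + 1` if `c_i = 1` when
`-1 ≤ s ≤ 0`; for `s < -1` the slice is empty because some `c_i = 1`. Hence the volume is
`∫∫_{[-1,0]²} g(y' + y_t)` with `g(s) = (-s)^p (s+1)^q` cut off at `s = -1`. Integrating out `y_t`
and then `y'` (Cauchy's formula for a repeated integral) leaves
`∫_{-1}^0 (-s)^(p+1) (s+1)^q ds = B(q+1, p+2) = q! (p+1)! / (p+q+2)!`.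
-/

section OneVariable

open intervalIntegral

theorem integral_pow_mul_one_sub_pow_succ (m n : ℕ) :
    ((m : ℝ) + 1) * ∫ x in (0 : ℝ)..1, x ^ m * (1 - x) ^ (n + 1) =
      ((n : ℝ) + 1) * ∫ x in (0 : ℝ)..1, x ^ (m + 1) * (1 - x) ^ n := by
  have hderiv : ∀ x ∈ Set.uIcc (0 : ℝ) 1,
      HasDerivAt (fun x : ℝ => x ^ (m + 1) * (1 - x) ^ (n + 1))
        (((m : ℝ) + 1) * (x ^ m * (1 - x) ^ (n + 1)) -
          ((n : ℝ) + 1) * (x ^ (m + 1) * (1 - x) ^ n)) x := by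
    intro x _
    refine (((hasDerivAt_id x).pow (m + 1)).mul
      (((hasDerivAt_id x).const_sub 1).pow (n + 1))).congr_deriv ?_
    simp only [id, Pi.pow_apply, Nat.add_sub_cancel, Nat.cast_add, Nat.cast_one]
    ring
  have hFTC := integral_eq_sub_of_hasDerivAt hderiv
    (Continuous.intervalIntegrable (by fun_prop) _ _)
  rw [integral_sub ((Continuous.intervalIntegrable (by fun_prop) _ _).const_mul _)
    ((Continuous.intervalIntegrable (by fun_prop) _ _).const_mul _),
    intervalIntegral.integral_const_mul, intervalIntegral.integral_const_mul] at hFTC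
  simp only [ne_eq, Nat.add_eq_zero_iff, one_ne_zero, and_false, not_false_eq_true, zero_pow,
    zero_mul, sub_self, mul_zero, sub_zero] at hFTC
  linarith

theorem integral_pow_mul_one_sub_pow (m n : ℕ) :
    ∫ x in (0 : ℝ)..1, x ^ m * (1 - x) ^ n =
      (m.factorial * n.factorial : ℝ) / (m + n + 1).factorial := by
  induction n generalizing m with
  | zero =>
    simp only [pow_zero, mul_one, integral_pow, Nat.add_zero, Nat.factorial_succ,
      Nat.factorial_zero]
    norm_num
    field_simp
  | succ n ih =>
    have h := integral_pow_mul_one_sub_pow_succ m n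
    rw [ih (m + 1), show m + 1 + n + 1 = m + (n + 1) + 1 by omega] at h
    rw [Nat.factorial_succ m] at h
    rw [Nat.factorial_succ n]
    push_cast at h ⊢
    field_simp at h ⊢
    linear_combination h

theorem integral_integral_eq_integral_sub_mul {f : ℝ → ℝ} (hf : Continuous f) (a b : ℝ) :
    ∫ x in a..b, ∫ s in a..x, f s = ∫ s in a..b, (b - s) * f s := by
  set F : ℝ → ℝ := fun x => ∫ s in a..x, f s
  have hF : Continuous F := continuous_primitive (fun _ _ => hf.intervalIntegrable _ _) a
  have hderiv : ∀ x ∈ Set.uIcc a b,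
      HasDerivAt (fun x => (x - b) * F x) (F x + (x - b) * f x) x := by
    intro x _
    refine (((hasDerivAt_id x).sub_const b).mul (integral_hasDerivAt_right
      (hf.intervalIntegrable a x) (hf.stronglyMeasurableAtFilter _ _)
        hf.continuousAt)).congr_deriv ?_
    simp only [id, one_mul]
    rfl
  have hcont : Continuous fun x => (x - b) * f x := by fun_prop
  have hFTC := integral_eq_sub_of_hasDerivAt hderiv ((hF.add hcont).intervalIntegrable a b)
  rw [integral_add (hF.intervalIntegrable a b) (hcont.intervalIntegrable a b)] at hFTC
  have hFa : F a = 0 := integral_same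
  simp only [sub_self, zero_mul, hFa, mul_zero] at hFTC
  have hneg : ∫ s in a..b, (b - s) * f s = -∫ s in a..b, (s - b) * f s := by
    rw [← intervalIntegral.integral_neg]; congr 1; ext s; ring
  linarith

theorem integral_comp_add_max_of_eq_zero {f : ℝ → ℝ} (hf : Continuous f) {c a : ℝ}
    (hfc : f c = 0) (hca : c ≤ a) (ha : a ≤ 0) :
    ∫ b in c..0, f (max c (a + b)) = ∫ s in c..a, f s := by
  have hmax : Continuous fun x => f (max c x) := by fun_prop
  rw [integral_comp_add_left (fun x => f (max c x)) a, add_zero,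
    ← integral_add_adjacent_intervals (b := c) (hmax.intervalIntegrable _ _)
      (hmax.intervalIntegrable _ _)]
  have hleft : ∫ x in a + c..c, f (max c x) = 0 := by
    rw [integral_congr (g := fun _ => (0 : ℝ))]
    · simp
    intro x hx
    rw [Set.uIcc_of_le (by linarith)] at hx
    simp [max_eq_left hx.2, hfc]
  have hright : ∫ x in c..a, f (max c x) = ∫ x in c..a, f x := by
    refine integral_congr fun x hx => ?_
    rw [Set.uIcc_of_le hca] at hx
    simp [max_eq_right hx.1]
  rw [hleft, hright, zero_add]

end OneVariable

namespace MeasurableEquiv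

def piFinFirstLast (n : ℕ) : (Fin (n + 1 + 1) → ℝ) ≃ᵐ (ℝ × ℝ) × (Fin n → ℝ) :=
  ((piFinSuccAbove (fun _ => ℝ) 0).trans
    ((refl ℝ).prodCongr (piFinSuccAbove (fun _ => ℝ) (Fin.last n)))).trans prodAssoc.symm

theorem piFinFirstLast_apply (n : ℕ) (y : Fin (n + 1 + 1) → ℝ) :
    piFinFirstLast n y = ((y 0, y (Fin.last (n + 1))), fun j => y j.castSucc.succ) := by
  ext : 2 <;> simp [piFinFirstLast, piFinSuccAbove_apply, prodCongr, prodAssoc, Fin.tail, Fin.init]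

end MeasurableEquiv

open MeasurableEquiv in
theorem measurePreserving_piFinFirstLast (n : ℕ) :
    MeasurePreserving (piFinFirstLast n) := by
  refine (volume_preserving_prodAssoc.symm _).comp ?_
  refine MeasurePreserving.comp
    (g := (refl ℝ).prodCongr (piFinSuccAbove (fun _ => ℝ) (Fin.last n))) ?_
    (volume_preserving_piFinSuccAbove (fun _ => ℝ) 0)
  exact (MeasurePreserving.id volume).prod
    (volume_preserving_piFinSuccAbove (fun _ => ℝ) (Fin.last n))

theorem volume_setOf_mem_pi_Icc {α ι : Type*} [MeasureSpace α] [SFinite (volume : Measure α)]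
    [Fintype ι] {A : Set α} (hA : MeasurableSet A) {lo hi : ι → α → ℝ}
    (hlo : ∀ i, Measurable (lo i)) (hhi : ∀ i, Measurable (hi i)) :
    volume {x : α × (ι → ℝ) | x.1 ∈ A ∧ ∀ i, x.2 i ∈ Set.Icc (lo i x.1) (hi i x.1)} =
      ∫⁻ a in A, ∏ i, ENNReal.ofReal (hi i a - lo i a) := by
  have hmeas : MeasurableSet
      {x : α × (ι → ℝ) | x.1 ∈ A ∧ ∀ i, x.2 i ∈ Set.Icc (lo i x.1) (hi i x.1)} := by
    refine (measurable_fst hA).inter ?_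
    show MeasurableSet {x : α × (ι → ℝ) | ∀ i, lo i x.1 ≤ x.2 i ∧ x.2 i ≤ hi i x.1}
    simp only [Set.ofPred_forall, Set.ofPred_and]
    exact .iInter fun i => (measurableSet_le (by fun_prop) (by fun_prop)).inter
      (measurableSet_le (by fun_prop) (by fun_prop))
  rw [Measure.volume_eq_prod, Measure.prod_apply hmeas, ← lintegral_indicator hA]
  refine lintegral_congr fun a => ?_
  by_cases ha : a ∈ A
  · have hslice : Prod.mk a ⁻¹'
          {x : α × (ι → ℝ) | x.1 ∈ A ∧ ∀ i, x.2 i ∈ Set.Icc (lo i x.1) (hi i x.1)} =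
        Set.Icc (fun i => lo i a) (fun i => hi i a) := by
      ext z; simp [ha, Set.mem_Icc, Pi.le_def, forall_and]
    rw [Set.indicator_of_mem ha, hslice, Real.volume_Icc_pi]
  · rw [Set.indicator_of_notMem ha]
    simp [ha]

theorem setOf_Ycoord_eq_preimage_piFinFirstLast (n : ℕ) (c : ℕ → ℝ) :
    {y : Fin (n + 1 + 1) → ℝ | (∀ i, -1 ≤ y i ∧ y i ≤ 0) ∧
      ∀ i, 1 ≤ i → i ≤ n →
        c i - 1 ≤ Ycoord y 0 + Ycoord y (n + 1) - Ycoord y i ∧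
        Ycoord y 0 + Ycoord y (n + 1) - Ycoord y i ≤ c i} =
    MeasurableEquiv.piFinFirstLast n ⁻¹'
      {x | x.1 ∈ Set.Icc (-1) 0 ×ˢ Set.Icc (-1) 0 ∧ ∀ j : Fin n, x.2 j ∈
        Set.Icc (max (-1) (x.1.1 + x.1.2 - c (j + 1)))
          (min 0 (x.1.1 + x.1.2 - c (j + 1) + 1))} := by
  ext y
  have hfirst : Ycoord y 0 = y 0 := Ycoord_of_lt y (by omega)
  have hlast : Ycoord y (n + 1) = y (Fin.last (n + 1)) := Ycoord_of_lt y (by omega)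
  have hmiddle (j : Fin n) : Ycoord y (j + 1) = y j.castSucc.succ := Ycoord_of_lt y (by omega)
  simp only [Set.mem_ofPred_eq, Set.mem_preimage, MeasurableEquiv.piFinFirstLast_apply,
    Set.mem_prod, Set.mem_Icc, max_le_iff, le_min_iff, hfirst, hlast]
  constructor
  · rintro ⟨hbox, hcon⟩
    refine ⟨⟨hbox 0, hbox _⟩, fun j => ?_⟩
    have h := hcon (j + 1) (by omega) (by omega)
    rw [hmiddle] at h
    have hj := hbox j.castSucc.succ
    exact ⟨⟨hj.1, by linarith [h.2]⟩, hj.2, by linarith [h.1]⟩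
  · rintro ⟨⟨hfst, hlst⟩, hmid⟩
    refine ⟨fun i => ?_, fun i hi1 hin => ?_⟩
    · induction i using Fin.cases with
      | zero => exact hfst
      | succ k =>
        induction k using Fin.lastCases with
        | last => exact hlst
        | cast j => exact ⟨(hmid j).1.1, (hmid j).2.1⟩
    · obtain ⟨j, rfl⟩ : ∃ j : Fin n, (j : ℕ) + 1 = i := ⟨⟨i - 1, by omega⟩, Nat.sub_add_cancel hi1⟩
      rw [hmiddle]
      have h := hmid j
      exact ⟨by linarith [h.2.2], by linarith [h.1.2]⟩

theorem volume_setOf_Ycoord_eq_setLIntegral (n : ℕ) (c : ℕ → ℝ) :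
    volume {y : Fin (n + 1 + 1) → ℝ | (∀ i, -1 ≤ y i ∧ y i ≤ 0) ∧
      ∀ i, 1 ≤ i → i ≤ n →
        c i - 1 ≤ Ycoord y 0 + Ycoord y (n + 1) - Ycoord y i ∧
        Ycoord y 0 + Ycoord y (n + 1) - Ycoord y i ≤ c i} =
    ∫⁻ x in Set.Icc (-1) 0 ×ˢ Set.Icc (-1) 0, ∏ j : Fin n,
      ENNReal.ofReal (min 0 (x.1 + x.2 - c (j + 1) + 1) - max (-1) (x.1 + x.2 - c (j + 1))) := by
  rw [setOf_Ycoord_eq_preimage_piFinFirstLast,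
    (measurePreserving_piFinFirstLast n).measure_preimage_equiv]
  exact volume_setOf_mem_pi_Icc (measurableSet_Icc.prod measurableSet_Icc)
    (lo := fun (j : Fin n) (x : ℝ × ℝ) => max (-1) (x.1 + x.2 - c (j + 1)))
    (hi := fun (j : Fin n) (x : ℝ × ℝ) => min 0 (x.1 + x.2 - c (j + 1) + 1))
    (fun _ => by fun_prop) (fun _ => by fun_prop)

theorem prod_ofReal_overlap {p q : ℕ} (hq : 0 < q) {s : ℝ} (hs : s ≤ 0) :
    ∏ j : Fin (p + q), ENNReal.ofReal
      (min 0 (s - (if (j : ℕ) + 1 ≤ p then 0 else 1) + 1) -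
        max (-1) (s - (if (j : ℕ) + 1 ≤ p then 0 else 1))) =
      ENNReal.ofReal ((-max (-1) s) ^ p * (max (-1) s + 1) ^ q) := by
  rw [Fin.prod_univ_eq_prod_range (fun i => ENNReal.ofReal
      (min 0 (s - (if i + 1 ≤ p then 0 else 1) + 1) -
        max (-1) (s - (if i + 1 ≤ p then 0 else 1)))),
    prod_range_add,
    prod_congr (s₁ := range p) rfl (g := fun _ => ENNReal.ofReal (min 0 (s + 1) - max (-1) s)),
    prod_congr (s₁ := range q) rfl (g := fun _ => ENNReal.ofReal (s + 1)),
    prod_const, prod_const, card_range, card_range]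
  rotate_left
  · intro i _
    rw [if_neg (by omega), sub_add_cancel, min_eq_right hs, max_eq_left (by linarith),
      sub_neg_eq_add]
  · intro i hi
    rw [if_pos (Nat.succ_le_of_lt (mem_range.1 hi)), sub_zero]
  rcases le_or_gt (-1) s with h | h
  · rw [max_eq_right h, min_eq_left (by linarith),
      ENNReal.ofReal_mul (pow_nonneg (by linarith) p), ENNReal.ofReal_pow (by linarith),
      ENNReal.ofReal_pow (by linarith), zero_sub]
  · rw [max_eq_left h.le, ENNReal.ofReal_of_nonpos (by linarith : s + 1 ≤ 0),
      neg_add_cancel, zero_pow hq.ne', zero_pow hq.ne', mul_zero, mul_zero, ENNReal.ofReal_zero]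

theorem setLIntegral_Icc_prod_Icc_ofReal {f : ℝ × ℝ → ℝ} (hf : Continuous f)
    {a₁ b₁ a₂ b₂ : ℝ} (h₁ : a₁ ≤ b₁) (h₂ : a₂ ≤ b₂)
    (hf_nonneg : ∀ x ∈ Set.Icc a₁ b₁ ×ˢ Set.Icc a₂ b₂, 0 ≤ f x) :
    ∫⁻ x in Set.Icc a₁ b₁ ×ˢ Set.Icc a₂ b₂, ENNReal.ofReal (f x) =
      ENNReal.ofReal (∫ x in a₁..b₁, ∫ y in a₂..b₂, f (x, y)) := by
  have hrect : MeasurableSet (Set.Icc a₁ b₁ ×ˢ Set.Icc a₂ b₂) :=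
    measurableSet_Icc.prod measurableSet_Icc
  rw [← ofReal_integral_eq_lintegral_ofReal
      (hf.continuousOn.integrableOn_compact (isCompact_Icc.prod isCompact_Icc))
      ((ae_restrict_iff' hrect).2 (ae_of_all _ hf_nonneg)),
    Measure.volume_eq_prod, setIntegral_prod _
      (hf.continuousOn.integrableOn_compact (isCompact_Icc.prod isCompact_Icc)),
    intervalIntegral.integral_of_le h₁, ← integral_Icc_eq_integral_Ioc]
  simp only [intervalIntegral.integral_of_le h₂, integral_Icc_eq_integral_Ioc]

theorem integral_integral_neg_pow_mul_add_one_pow_max (p q : ℕ) (hq : 0 < q) :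
    ∫ a in (-1 : ℝ)..0, ∫ b in (-1 : ℝ)..0,
        (-max (-1) (a + b)) ^ p * (max (-1) (a + b) + 1) ^ q =
      (q.factorial * (p + 1).factorial : ℝ) / (p + q + 2).factorial := by
  have hcont : Continuous fun s : ℝ => (-s) ^ p * (s + 1) ^ q := by fun_prop
  calc ∫ a in (-1 : ℝ)..0, ∫ b in (-1 : ℝ)..0,
        (-max (-1) (a + b)) ^ p * (max (-1) (a + b) + 1) ^ q
      = ∫ a in (-1 : ℝ)..0, ∫ s in (-1 : ℝ)..a, (-s) ^ p * (s + 1) ^ q := by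
        refine intervalIntegral.integral_congr fun a ha => ?_
        rw [Set.uIcc_of_le (by norm_num)] at ha
        exact integral_comp_add_max_of_eq_zero hcont (by simp [zero_pow hq.ne']) ha.1 ha.2
    _ = ∫ s in (-1 : ℝ)..0, (0 - s) * ((-s) ^ p * (s + 1) ^ q) :=
        integral_integral_eq_integral_sub_mul hcont _ _
    _ = ∫ x in (0 : ℝ)..1, x ^ q * (1 - x) ^ (p + 1) := by
        have hshift (s : ℝ) : (0 - s) * ((-s) ^ p * (s + 1) ^ q) =
            (fun x => x ^ q * (1 - x) ^ (p + 1)) (s + 1) := by ring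
        rw [intervalIntegral.integral_congr fun s _ => hshift s,
          intervalIntegral.integral_comp_add_right (fun x => x ^ q * (1 - x) ^ (p + 1))]
        norm_num
    _ = _ := by
        rw [integral_pow_mul_one_sub_pow, show q + (p + 1) + 1 = p + q + 2 by omega]

theorem stmt10_general (t p q : ℕ) (hq : 0 < q) (hpq : p + q = t - 1) :
    volume {y : Fin (t + 1) → ℝ |
      (∀ i, -1 ≤ y i ∧ y i ≤ 0) ∧
      ∀ i, 1 ≤ i → i ≤ t - 1 →
        (if i ≤ p then (0 : ℝ) else 1) - 1 ≤ Ycoord y 0 + Ycoord y t - Ycoord y i ∧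
        Ycoord y 0 + Ycoord y t - Ycoord y i ≤ (if i ≤ p then (0 : ℝ) else 1)} =
    ((Nat.factorial q * Nat.factorial (t - q) : ℕ) : ℝ≥0∞) /
      (Nat.factorial (t + 1) : ℝ≥0∞) := by
  obtain rfl : t = p + q + 1 := by omega
  have hsquare : MeasurableSet (Set.Icc (-1 : ℝ) 0 ×ˢ Set.Icc (-1 : ℝ) 0) :=
    measurableSet_Icc.prod measurableSet_Icc
  rw [Nat.add_sub_cancel,
    volume_setOf_Ycoord_eq_setLIntegral (p + q) fun i => if i ≤ p then 0 else 1,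
    setLIntegral_congr_fun hsquare fun x hx =>
      prod_ofReal_overlap hq (by linarith [hx.1.2, hx.2.2]),
    setLIntegral_Icc_prod_Icc_ofReal (by fun_prop) (by norm_num) (by norm_num) ?_,
    integral_integral_neg_pow_mul_add_one_pow_max p q hq, show p + q + 1 - q = p + 1 by omega]
  · rw [ENNReal.ofReal_div_of_pos (by positivity), ← Nat.cast_mul, ENNReal.ofReal_natCast,
      ENNReal.ofReal_natCast]
  · intro x hx
    have hmax : max (-1) (x.1 + x.2) ≤ 0 := max_le (by norm_num) (by linarith [hx.1.2, hx.2.2])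
    exact mul_nonneg (pow_nonneg (by linarith) p)
      (pow_nonneg (by linarith [le_max_left (-1 : ℝ) (x.1 + x.2)]) q)

theorem stmt10 (t p q : ℕ) (ht : 2 ≤ t) (hq : 0 < q) (hpq : p + q = t - 1) :
    volume {y : Fin (t + 1) → ℝ |
      (∀ i, -1 ≤ y i ∧ y i ≤ 0) ∧
      ∀ i, 1 ≤ i → i ≤ t - 1 →
        (if i ≤ p then (0 : ℝ) else 1) - 1 ≤ Ycoord y 0 + Ycoord y t - Ycoord y i ∧
        Ycoord y 0 + Ycoord y t - Ycoord y i ≤ (if i ≤ p then (0 : ℝ) else 1)} =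
    ((Nat.factorial q * Nat.factorial (t - q) : ℕ) : ℝ≥0∞) /
      (Nat.factorial (t + 1) : ℝ≥0∞) :=
  stmt10_general t p q hq hpq
end

section
/- Let t ≥ 2 and q with 1 ≤ q ≤ t−1, p = t−1−q. The set of permutations w ∈ S_{t+1} satisfying (i) des(w_1 ⋯ w_{t+1−i}) = c_i + ∑_{ℓ=i}^{t−1} α_ℓ for some (α_1,…,α_{t−1}) ∈ {0,1}^{t−1} and each i = 1,…,t−1, where (c_1,…,c_{t−1}) = (0^p, 1^q), and (ii) des(w_{t+1−i} ⋯ w_{t+1}) ∈ {∑_{ℓ=1}^{i−1}α_ℓ, ∑_{ℓ=1}^{i−1}α_ℓ + 1} with w_{t+1−i} < w_{t+1} in the first case and w_{t+1−i} > w_{t+1} in the second, for each i = 2,…,t, is exactly the set 𝒰_p = {w ∈ S_{t+1} : w_2,…,w_{t−p} < w_{t+1} = q+1 < w_1, w_{t+1−p},…,w_t} when p ≤ t−2. -/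
open MeasureTheory Finset ENNReal

/-!
Write `c_i = [i > p]` and `e_i = [w_{t+1} < w_{t+1-i}]`. Condition (ii) says that the suffix
`w_{t+1-i} ⋯ w_{t+1}` has `α_1 + ⋯ + α_{i-1} + e_i` descents, and this holds trivially for `i = 1`.
Adding (i) and (ii) at the same `i` splits `des(w)` as `c_i + e_i + ∑ α` for `1 ≤ i ≤ t - 1`, while
(ii) at `i = t` gives `des(w) = e_t + ∑ α`. Hence `c_i + e_i = e_t`, and `c_{t-1} = 1` forces
`e_t = 1` and `e_i = 1 - c_i`: the letters larger than `w_{t+1}` are exactly `w_1` and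
`w_{t+1-p}, …, w_t`, so `w_{t+1} = q + 1` by counting.

Conversely, for such `w` the prefix counts `des(w_1 ⋯ w_{t+1-i}) - c_i` drop by `0` or `1` at each
step of `i`, so they are the tail sums of a `0/1` sequence `α`; this gives (i), and (ii) follows from
the same splitting of `des(w)`.
-/

section OneLine

variable {d : ℕ} (w : Equiv.Perm (Fin d)) {i : ℕ}

lemma one_le_ov (hi1 : 1 ≤ i) (hid : i ≤ d) : 1 ≤ ov w i := by
  simp [ov, hi1, hid]

lemma ov_le (i : ℕ) : ov w i ≤ d := by
  unfold ov
  split_ifs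
  · exact Fin.isLt _
  · exact Nat.zero_le d

lemma ov_symm_ov (hi1 : 1 ≤ i) (hid : i ≤ d) : ov w.symm (ov w i) = i := by
  have hx : (⟨(w ⟨i - 1, by omega⟩).val + 1 - 1, by omega⟩ : Fin d) = w ⟨i - 1, by omega⟩ :=
    Fin.ext (Nat.add_sub_cancel _ _)
  simp only [ov, dif_pos (And.intro hi1 hid)]
  rw [dif_pos ⟨by omega, by omega⟩, hx, Equiv.symm_apply_apply]
  exact Nat.sub_add_cancel hi1

lemma ov_ne {j : ℕ} (hi1 : 1 ≤ i) (hid : i ≤ d) (hj1 : 1 ≤ j) (hjd : j ≤ d) (hij : i ≠ j) :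
    ov w i ≠ ov w j := fun h =>
  hij (by rw [← ov_symm_ov w hi1 hid, h, ov_symm_ov w hj1 hjd])

lemma ov_lt_of_not_lt {j : ℕ} (hi1 : 1 ≤ i) (hid : i ≤ d) (hj1 : 1 ≤ j) (hjd : j ≤ d)
    (hij : i ≠ j) (h : ¬ ov w j < ov w i) : ov w i < ov w j :=
  lt_of_le_of_ne (not_lt.1 h) (ov_ne w hi1 hid hj1 hjd hij)

lemma card_filter_ov_lt (k : ℕ) :
    #((Icc 1 d).filter (fun j => ov w j < ov w k)) = ov w k - 1 := by
  rw [← Nat.card_Ico]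
  apply card_nbij' (ov w) (ov w.symm)
  · intro j hj
    simp only [coe_filter, mem_Icc, Set.mem_ofPred_eq, coe_Ico, Set.mem_Ico] at hj ⊢
    exact ⟨one_le_ov w hj.1.1 hj.1.2, hj.2⟩
  · intro v hv
    have hvd : v ≤ d := by have := ov_le w k; simp only [coe_Ico, Set.mem_Ico] at hv; omega
    simp only [coe_filter, mem_Icc, Set.mem_ofPred_eq, coe_Ico, Set.mem_Ico] at hv ⊢
    have h := ov_symm_ov w.symm hv.1 hvd
    rw [Equiv.symm_symm] at h
    refine ⟨⟨one_le_ov w.symm hv.1 hvd, ov_le w.symm v⟩, ?_⟩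
    rw [h]
    exact hv.2
  · intro j hj
    simp only [coe_filter, mem_Icc, Set.mem_ofPred_eq] at hj
    exact ov_symm_ov w hj.1.1 hj.1.2
  · intro v hv
    have hvd : v ≤ d := by have := ov_le w k; simp only [coe_Ico, Set.mem_Ico] at hv; omega
    simp only [coe_Ico, Set.mem_Ico] at hv
    simpa using ov_symm_ov w.symm hv.1 hvd

lemma des_add {a b c : ℕ} (hab : a ≤ b) (hbc : b ≤ c) :
    des w a c = des w a b + des w b c := by
  rw [des, des, des, ← Ico_union_Ico_eq_Ico hab hbc, filter_union,
    card_union_of_disjoint (disjoint_filter_filter (Ico_disjoint_Ico_consecutive a b c))]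

lemma des_succ (b : ℕ) : des w b (b + 1) = if ov w (b + 1) < ov w b then 1 else 0 := by
  rw [des, Nat.Ico_succ_singleton, filter_singleton]
  split_ifs <;> rfl

end OneLine

lemma sum_Icc_one_sub_one_add_sum_Icc {M : Type*} [AddCommMonoid M] (f : ℕ → M) {i n : ℕ}
    (hi : 1 ≤ i) (hin : i ≤ n + 1) :
    ∑ ℓ ∈ Icc 1 (i - 1), f ℓ + ∑ ℓ ∈ Icc i n, f ℓ = ∑ ℓ ∈ Icc 1 n, f ℓ := by
  obtain ⟨k, rfl⟩ := Nat.exists_eq_add_of_le' hi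
  rw [Nat.add_sub_cancel, ← Ico_add_one_right_eq_Icc, ← Ico_add_one_right_eq_Icc,
    ← Ico_add_one_right_eq_Icc, sum_Ico_consecutive _ (by omega) hin]

lemma exists_le_one_sum_Icc_eq (f : ℕ → ℕ) {m n : ℕ}
    (hstep : ∀ i, m ≤ i → i < n → f (i + 1) ≤ f i ∧ f i ≤ f (i + 1) + 1) (hn : f n ≤ 1) :
    ∃ α : ℕ → ℕ, (∀ ℓ, α ℓ ≤ 1) ∧ ∀ i, m ≤ i → i ≤ n → f i = ∑ ℓ ∈ Icc i n, α ℓ := by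
  refine ⟨fun ℓ => if m ≤ ℓ ∧ ℓ < n then f ℓ - f (ℓ + 1) else if ℓ = n then f n else 0,
    fun ℓ => ?_, fun i hmi hin => ?_⟩
  · dsimp only
    split_ifs with h
    · have := hstep ℓ h.1 h.2
      omega
    · exact hn
    · exact zero_le_one
  · induction hin using Nat.decreasingInduction with
    | self => simp
    | of_succ k hkn ih =>
      rw [← add_sum_Ioc_eq_sum_Icc hkn.le, ← Icc_add_one_left_eq_Ioc, ← ih (by omega),
        if_pos ⟨hmi, hkn⟩]
      have := hstep k hmi hkn
      omega

lemma eq_add_ite_lt_iff {a b x y : ℕ} (hxy : x ≠ y) :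
    ((a = b ∧ x < y) ∨ (a = b + 1 ∧ y < x)) ↔ a = b + if y < x then 1 else 0 := by
  split_ifs <;> omega

section LastLetter

variable {t p : ℕ} (w : Equiv.Perm (Fin (t + 1)))

lemma lt_ov_iff_of_des_eq (hpt : p + 2 ≤ t) (α : ℕ → ℕ)
    (hpre : ∀ i, 1 ≤ i → i ≤ t - 1 →
      des w 1 (t + 1 - i) = (if i ≤ p then 0 else 1) + ∑ ℓ ∈ Icc i (t - 1), α ℓ)
    (hsuf : ∀ i, 2 ≤ i → i ≤ t → des w (t + 1 - i) (t + 1) =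
      (∑ ℓ ∈ Icc 1 (i - 1), α ℓ) + if ov w (t + 1) < ov w (t + 1 - i) then 1 else 0)
    {i : ℕ} (hi1 : 1 ≤ i) (hit : i ≤ t) :
    ov w (t + 1) < ov w (t + 1 - i) ↔ i ≤ p ∨ i = t := by
  have hsplit : ∀ k, 1 ≤ k → k ≤ t - 1 → des w 1 (t + 1) = (if k ≤ p then 0 else 1) +
      (∑ ℓ ∈ Icc 1 (t - 1), α ℓ) + if ov w (t + 1) < ov w (t + 1 - k) then 1 else 0 := by
    intro k hk1 hkt
    have hsuf_k : des w (t + 1 - k) (t + 1) = (∑ ℓ ∈ Icc 1 (k - 1), α ℓ) +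
        if ov w (t + 1) < ov w (t + 1 - k) then 1 else 0 := by
      rcases Nat.lt_or_ge 1 k with h | h
      · exact hsuf k h (by omega)
      · obtain rfl : k = 1 := by omega
        simp [des_succ]
    have hsum := sum_Icc_one_sub_one_add_sum_Icc α hk1 (n := t - 1) (by omega)
    rw [des_add w (by omega : 1 ≤ t + 1 - k) (by omega), hpre k hk1 hkt, hsuf_k]
    omega
  have htop := hsuf t (by omega) le_rfl
  rw [Nat.add_sub_cancel_left] at htop
  have hsecond := hsplit (t - 1) (by omega) le_rfl
  have hsplit_i := hsplit i hi1
  rw [if_neg (by omega : ¬ t - 1 ≤ p)] at hsecond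
  rcases Nat.lt_or_ge i t with hlt | hge
  · specialize hsplit_i (by omega)
    split_ifs at hsecond htop hsplit_i <;> omega
  · obtain rfl : i = t := by omega
    rw [Nat.add_sub_cancel_left, iff_true_intro (Or.inr rfl), iff_true]
    by_contra h
    rw [if_neg h] at htop
    split_ifs at hsecond <;> omega

lemma exists_prefix_des_eq (hpt : p + 2 ≤ t) (hfirst : des w 1 2 = 1)
    (hflat : 1 ≤ p → des w (t - p) (t - p + 1) = 0) :
    ∃ α : ℕ → ℕ, (∀ ℓ, α ℓ ≤ 1) ∧ ∀ i, 1 ≤ i → i ≤ t - 1 →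
      des w 1 (t + 1 - i) = (if i ≤ p then 0 else 1) + ∑ ℓ ∈ Icc i (t - 1), α ℓ := by
  have hpos : ∀ j, 2 ≤ j → 1 ≤ des w 1 j := fun j hj => by
    rw [des_add w one_le_two hj, hfirst]
    omega
  obtain ⟨α, hα, hf⟩ := exists_le_one_sum_Icc_eq
    (fun i => des w 1 (t + 1 - i) - if i ≤ p then 0 else 1) (m := 1) (n := t - 1)
    (fun i hi1 hit => by
      have hadd : des w 1 (t + 1 - i) = des w 1 (t - i) + des w (t - i) (t - i + 1) := by
        rw [← des_add w (by omega) (by omega)]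
        congr 1
        omega
      have hle : des w (t - i) (t - i + 1) ≤ 1 := by
        rw [des_succ]
        split_ifs <;> omega
      -- at `i = p` the jump of `if i ≤ p then 0 else 1` meets the ascent `w_{t-p} < w_{t+1-p}`
      have hflat_i : i = p → des w (t - i) (t - i + 1) = 0 := fun h => h ▸ hflat (h ▸ hi1)
      have := hpos (t - i) (by omega)
      rw [show t + 1 - (i + 1) = t - i by omega]
      split_ifs at * <;> omega)
    (by
      rw [show t + 1 - (t - 1) = 2 by omega, hfirst]
      split_ifs <;> omega)
  refine ⟨α, hα, fun i hi1 hit => ?_⟩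
  rw [← hf i hi1 hit]
  have := hpos (t + 1 - i) (by omega)
  split_ifs <;> omega

lemma suffix_des_eq_of_prefix_des_eq (hpt : p + 2 ≤ t) (α : ℕ → ℕ)
    (hpre : ∀ i, 1 ≤ i → i ≤ t - 1 →
      des w 1 (t + 1 - i) = (if i ≤ p then 0 else 1) + ∑ ℓ ∈ Icc i (t - 1), α ℓ)
    (hlast : des w t (t + 1) = if 1 ≤ p then 1 else 0)
    (hpat : ∀ i, 1 ≤ i → i ≤ t → (ov w (t + 1) < ov w (t + 1 - i) ↔ i ≤ p ∨ i = t))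
    {i : ℕ} (hi2 : 2 ≤ i) (hit : i ≤ t) :
    des w (t + 1 - i) (t + 1) =
      (∑ ℓ ∈ Icc 1 (i - 1), α ℓ) + if ov w (t + 1) < ov w (t + 1 - i) then 1 else 0 := by
  have htotal : des w 1 (t + 1) = ∑ ℓ ∈ Icc 1 (t - 1), α ℓ + 1 := by
    have h1 := hpre 1 le_rfl (by omega)
    rw [Nat.add_sub_cancel] at h1
    rw [des_add w (by omega : 1 ≤ t) (by omega), hlast, h1]
    split_ifs <;> omega
  rcases Nat.lt_or_ge i t with hit' | hit'
  · have hsum := sum_Icc_one_sub_one_add_sum_Icc α (n := t - 1) (by omega : 1 ≤ i) (by omega)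
    have hdes := des_add w (by omega : 1 ≤ t + 1 - i) (by omega : t + 1 - i ≤ t + 1)
    rw [hpre i (by omega) (by omega)] at hdes
    have h := hpat i (by omega) hit
    rw [or_iff_left hit'.ne] at h
    simp only [h]
    split_ifs at hdes ⊢ <;> omega
  · have h1 := (hpat t (by omega) le_rfl).2 (Or.inr rfl)
    rw [Nat.add_sub_cancel_left] at h1
    rw [show i = t by omega, Nat.add_sub_cancel_left, if_pos h1, htotal]

lemma exists_des_eq_of_lt_ov_iff (hpt : p + 2 ≤ t)
    (hpat : ∀ i, 1 ≤ i → i ≤ t → (ov w (t + 1) < ov w (t + 1 - i) ↔ i ≤ p ∨ i = t)) :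
    ∃ α : ℕ → ℕ, (∀ ℓ, α ℓ ≤ 1) ∧
      (∀ i, 1 ≤ i → i ≤ t - 1 →
        des w 1 (t + 1 - i) = (if i ≤ p then 0 else 1) + ∑ ℓ ∈ Icc i (t - 1), α ℓ) ∧
      (∀ i, 2 ≤ i → i ≤ t → des w (t + 1 - i) (t + 1) =
        (∑ ℓ ∈ Icc 1 (i - 1), α ℓ) + if ov w (t + 1) < ov w (t + 1 - i) then 1 else 0) := by
  have hlt : ∀ i, 1 ≤ i → i ≤ t → ¬ (i ≤ p ∨ i = t) → ov w (t + 1 - i) < ov w (t + 1) :=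
    fun i hi1 hit h => ov_lt_of_not_lt w (by omega) (by omega) (by omega) le_rfl (by omega)
      ((hpat i hi1 hit).not.2 h)
  have hfirst : des w 1 2 = 1 := by
    have h2 := hlt (t - 1) (by omega) (by omega) (by omega)
    have h1 := (hpat t (by omega) le_rfl).2 (Or.inr rfl)
    rw [show t + 1 - (t - 1) = 2 by omega] at h2
    rw [Nat.add_sub_cancel_left] at h1
    rw [des_succ, if_pos (h2.trans h1)]
  have hlast : des w t (t + 1) = if 1 ≤ p then 1 else 0 := by
    have h := hpat 1 le_rfl (by omega)
    rw [Nat.add_sub_cancel, or_iff_left (by omega : 1 ≠ t)] at h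
    simp only [des_succ, h]
  have hflat : 1 ≤ p → des w (t - p) (t - p + 1) = 0 := by
    intro hp
    have h1 := hlt (p + 1) (by omega) (by omega) (by omega)
    have h2 := (hpat p hp (by omega)).2 (Or.inl le_rfl)
    rw [show t + 1 - (p + 1) = t - p by omega] at h1
    rw [show t + 1 - p = t - p + 1 by omega] at h2
    rw [des_succ, if_neg (h1.trans h2).not_gt]
  obtain ⟨α, hα, hpre⟩ := exists_prefix_des_eq w hpt hfirst hflat
  exact ⟨α, hα, hpre, fun i hi2 hit =>
    suffix_des_eq_of_prefix_des_eq w hpt α hpre hlast hpat hi2 hit⟩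

lemma ov_last_eq_of_lt_ov_iff (hpt : p < t)
    (hpat : ∀ j, 1 ≤ j → j ≤ t → (ov w (t + 1) < ov w j ↔ j = 1 ∨ t + 1 - p ≤ j)) :
    ov w (t + 1) = t - p := by
  have hfilter : (Icc 1 (t + 1)).filter (fun j => ov w j < ov w (t + 1)) = Icc 2 (t - p) := by
    ext j
    simp only [mem_filter, mem_Icc]
    rcases Nat.lt_or_ge j (t + 1) with hj | hj
    · constructor
      · rintro ⟨⟨hj1, -⟩, hlt⟩
        have := (hpat j hj1 (by omega)).not.1 (lt_asymm hlt)
        omega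
      · rintro ⟨hj2, hjp⟩
        exact ⟨⟨by omega, by omega⟩, ov_lt_of_not_lt w (by omega) (by omega) (by omega) le_rfl
          (by omega) ((hpat j (by omega) (by omega)).not.2 (by omega))⟩
    · constructor
      · rintro ⟨⟨-, hj'⟩, hlt⟩
        rw [show j = t + 1 by omega] at hlt
        exact absurd hlt (lt_irrefl _)
      · omega
  have hcard := card_filter_ov_lt w (t + 1)
  have hpos := one_le_ov w (by omega : 1 ≤ t + 1) le_rfl
  rw [hfilter, Nat.card_Icc] at hcard
  omega

lemma lt_ov_iff_iff_ov_last_eq {q : ℕ} (hpqt : p + q + 1 = t) :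
    (∀ i, 1 ≤ i → i ≤ t → (ov w (t + 1) < ov w (t + 1 - i) ↔ i ≤ p ∨ i = t)) ↔
      (ov w (t + 1) = q + 1 ∧
        (∀ i, 2 ≤ i → i ≤ t - p → ov w i < q + 1) ∧
        q + 1 < ov w 1 ∧
        (∀ i, t + 1 - p ≤ i → i ≤ t → q + 1 < ov w i)) := by
  have hreindex : (∀ i, 1 ≤ i → i ≤ t → (ov w (t + 1) < ov w (t + 1 - i) ↔ i ≤ p ∨ i = t)) ↔
      ∀ j, 1 ≤ j → j ≤ t → (ov w (t + 1) < ov w j ↔ j = 1 ∨ t + 1 - p ≤ j) := by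
    constructor
    · intro h j hj1 hjt
      rw [show j = t + 1 - (t + 1 - j) by omega, h (t + 1 - j) (by omega) (by omega)]
      omega
    · intro h i hi1 hit
      rw [h (t + 1 - i) (by omega) (by omega)]
      omega
  rw [hreindex]
  constructor
  · intro hpat
    have hlast : ov w (t + 1) = q + 1 := by
      rw [ov_last_eq_of_lt_ov_iff w (by omega) hpat]
      omega
    refine ⟨hlast, fun j hj2 hjp => ?_, ?_, fun j hj1 hjt => ?_⟩
    · rw [← hlast]
      exact ov_lt_of_not_lt w (by omega) (by omega) (by omega) le_rfl (by omega)
        ((hpat j (by omega) (by omega)).not.2 (by omega))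
    · rw [← hlast]
      exact (hpat 1 le_rfl (by omega)).2 (Or.inl rfl)
    · rw [← hlast]
      exact (hpat j (by omega) hjt).2 (Or.inr hj1)
  · rintro ⟨hlast, hsmall, hfirst, hbig⟩ j hj1 hjt
    rw [hlast]
    rcases Nat.lt_or_ge (t - p) j with hj | hj
    · exact iff_of_true (hbig j (by omega) hjt) (Or.inr (by omega))
    · rcases Nat.lt_or_ge 1 j with hj' | hj'
      · exact iff_of_false (hsmall j hj' hj).not_gt (by omega)
      · rw [show j = 1 by omega]
        exact iff_of_true hfirst (Or.inl rfl)

end LastLetter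

theorem stmt11_general (t p q : ℕ) (hq1 : 1 ≤ q) (hq2 : q ≤ t - 1)
    (hp : p = t - 1 - q) (w : Equiv.Perm (Fin (t + 1))) :
    (∃ α : ℕ → ℕ, (∀ ℓ, α ℓ ≤ 1) ∧
      (∀ i, 1 ≤ i → i ≤ t - 1 →
        des w 1 (t + 1 - i) =
          (if i ≤ p then 0 else 1) + ∑ ℓ ∈ Finset.Icc i (t - 1), α ℓ) ∧
      (∀ i, 2 ≤ i → i ≤ t →
        (des w (t + 1 - i) (t + 1) = (∑ ℓ ∈ Finset.Icc 1 (i - 1), α ℓ) ∧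
          ov w (t + 1 - i) < ov w (t + 1)) ∨
        (des w (t + 1 - i) (t + 1) = (∑ ℓ ∈ Finset.Icc 1 (i - 1), α ℓ) + 1 ∧
          ov w (t + 1) < ov w (t + 1 - i)))) ↔
    (ov w (t + 1) = q + 1 ∧
      (∀ i, 2 ≤ i → i ≤ t - p → ov w i < q + 1) ∧
      q + 1 < ov w 1 ∧
      (∀ i, t + 1 - p ≤ i → i ≤ t → q + 1 < ov w i)) := by
  have hpt : p + 2 ≤ t := by omega
  have hsuffix : ∀ i, 2 ≤ i → i ≤ t → ov w (t + 1 - i) ≠ ov w (t + 1) := fun i hi2 hit =>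
    ov_ne w (by omega) (by omega) (by omega) le_rfl (by omega)
  rw [← lt_ov_iff_iff_ov_last_eq w (by omega : p + q + 1 = t)]
  constructor
  · rintro ⟨α, -, hpre, hsuf⟩ i hi1 hit
    exact lt_ov_iff_of_des_eq w hpt α hpre
      (fun i hi2 hit => (eq_add_ite_lt_iff (hsuffix i hi2 hit)).1 (hsuf i hi2 hit)) hi1 hit
  · intro hpat
    obtain ⟨α, hα, hpre, hsuf⟩ := exists_des_eq_of_lt_ov_iff w hpt hpat
    exact ⟨α, hα, hpre,
      fun i hi2 hit => (eq_add_ite_lt_iff (hsuffix i hi2 hit)).2 (hsuf i hi2 hit)⟩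

theorem stmt11 (t p q : ℕ) (ht : 2 ≤ t) (hq1 : 1 ≤ q) (hq2 : q ≤ t - 1)
    (hp : p = t - 1 - q) (hpt : p ≤ t - 2) (w : Equiv.Perm (Fin (t + 1))) :
    (∃ α : ℕ → ℕ, (∀ ℓ, α ℓ ≤ 1) ∧
      (∀ i, 1 ≤ i → i ≤ t - 1 →
        des w 1 (t + 1 - i) =
          (if i ≤ p then 0 else 1) + ∑ ℓ ∈ Finset.Icc i (t - 1), α ℓ) ∧
      (∀ i, 2 ≤ i → i ≤ t →
        (des w (t + 1 - i) (t + 1) = (∑ ℓ ∈ Finset.Icc 1 (i - 1), α ℓ) ∧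
          ov w (t + 1 - i) < ov w (t + 1)) ∨
        (des w (t + 1 - i) (t + 1) = (∑ ℓ ∈ Finset.Icc 1 (i - 1), α ℓ) + 1 ∧
          ov w (t + 1) < ov w (t + 1 - i)))) ↔
    (ov w (t + 1) = q + 1 ∧
      (∀ i, 2 ≤ i → i ≤ t - p → ov w i < q + 1) ∧
      q + 1 < ov w 1 ∧
      (∀ i, t + 1 - p ≤ i → i ≤ t → q + 1 < ov w i)) :=
  stmt11_general t p q hq1 hq2 hp w
end

section
/- The Euclidean volume of the polytope {(z_1,…,z_5) ∈ ℝ^5 : 0 ≤ z_1 ≤ 1, 0 ≤ z_i − z_{i−1} ≤ 1 for i = 2,…,5, 0 ≤ z_5 ≤ 1, 0 ≤ z_4 − z_1 ≤ 1} equals 1/120; equivalently, it is the number of w ∈ S_5 with w_1 < w_2 < w_3 < w_4 < w_5 divided by 5!. -/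
open MeasureTheory Finset ENNReal

/-! The constraints cut out the order simplex `0 ≤ z₁ ≤ ⋯ ≤ z₅ ≤ 1`: the upper bounds on the
differences and on `z₄ - z₁` are implied by the chain. Slicing along the first coordinate,
the order simplex `{a ≤ z₁ ≤ ⋯ ≤ zₙ ≤ b}` has volume `∫ₐᵇ (b - x)ⁿ⁻¹/(n-1)! dx = (b - a)ⁿ/n!`.
On the combinatorial side, the identity is the only increasing permutation. -/

open scoped Nat

def orderSimplex (n : ℕ) (a b : ℝ) : Set (Fin n → ℝ) :=
  {z | Monotone z ∧ ∀ i, z i ∈ Set.Icc a b}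

theorem mem_orderSimplex_succ_iff {n : ℕ} {a b : ℝ} {z : Fin (n + 1) → ℝ} :
    z ∈ orderSimplex (n + 1) a b ↔ z 0 ∈ Set.Icc a b ∧ Fin.tail z ∈ orderSimplex n (z 0) b := by
  constructor
  · rintro ⟨hmono, hz⟩
    exact ⟨hz 0, hmono.comp (Fin.strictMono_succ.monotone),
      fun i => ⟨hmono (Fin.zero_le _), (hz _).2⟩⟩
  · rintro ⟨h0, htail, hz⟩
    refine ⟨fun i j hij => ?_, Fin.cases h0 fun i => ⟨h0.1.trans (hz i).1, (hz i).2⟩⟩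
    cases i using Fin.cases with
    | zero => cases j using Fin.cases with
      | zero => exact le_rfl
      | succ j => exact (hz j).1
    | succ i => cases j using Fin.cases with
      | zero => exact absurd hij (by simp)
      | succ j => exact htail (Fin.succ_le_succ_iff.mp hij)

theorem volume_fin_succ_eq_lintegral {n : ℕ} {S : Set (ℝ × (Fin n → ℝ))} (hS : MeasurableSet S) :
    volume {z : Fin (n + 1) → ℝ | (z 0, Fin.tail z) ∈ S} = ∫⁻ x, volume (Prod.mk x ⁻¹' S) := by
  have hp := volume_preserving_piFinSuccAbove (fun _ : Fin (n + 1) => ℝ) 0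
  rw [← Measure.prod_apply hS, ← Measure.volume_eq_prod,
    ← hp.measure_preimage hS.nullMeasurableSet]
  rfl

theorem lintegral_Icc_sub_pow_div_factorial {a b : ℝ} (hab : a ≤ b) (n : ℕ) :
    ∫⁻ x in Set.Icc a b, ENNReal.ofReal ((b - x) ^ n / n !) =
      ENNReal.ofReal ((b - a) ^ (n + 1) / (n + 1)!) := by
  have hint : ∫ x in a..b, (b - x) ^ n / n ! = (b - a) ^ (n + 1) / (n + 1)! := by
    rw [intervalIntegral.integral_comp_sub_left (fun u => u ^ n / n !) b,
      intervalIntegral.integral_div, integral_pow, Nat.factorial_succ]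
    push_cast
    field_simp
    ring
  rw [← hint, intervalIntegral.integral_of_le hab, ← integral_Icc_eq_integral_Ioc,
    ofReal_integral_eq_lintegral_ofReal]
  · exact (by fun_prop : Continuous fun x : ℝ => (b - x) ^ n / n !).integrableOn_Icc
  · filter_upwards [self_mem_ae_restrict measurableSet_Icc] with x hx
    have : 0 ≤ b - x := by linarith [hx.2]
    positivity

theorem isClosed_setOf_mem_orderSimplex (n : ℕ) (a b : ℝ) :
    IsClosed {p : ℝ × (Fin n → ℝ) | p.1 ∈ Set.Icc a b ∧ p.2 ∈ orderSimplex n p.1 b} := by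
  have h_eq : {p : ℝ × (Fin n → ℝ) | p.1 ∈ Set.Icc a b ∧ p.2 ∈ orderSimplex n p.1 b} =
      Prod.fst ⁻¹' Set.Icc a b ∩ (Prod.snd ⁻¹' {z | Monotone z} ∩
        ⋂ i, {p | p.1 ≤ p.2 i} ∩ {p | p.2 i ≤ b}) := by
    ext p
    simp [orderSimplex, and_assoc, forall_and]
  rw [h_eq]
  exact (isClosed_Icc.preimage continuous_fst).inter <|
    (isClosed_monotone.preimage continuous_snd).inter <| isClosed_iInter fun i =>
      (isClosed_le (by fun_prop) (by fun_prop)).inter (isClosed_le (by fun_prop) (by fun_prop))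

theorem volume_orderSimplex (n : ℕ) {a b : ℝ} (hab : a ≤ b) :
    volume (orderSimplex n a b) = ENNReal.ofReal ((b - a) ^ n / n !) := by
  induction n generalizing a with
  | zero =>
    rw [show orderSimplex 0 a b = Set.univ from
      Set.eq_univ_of_forall fun z => ⟨fun i => i.elim0, fun i => i.elim0⟩,
      volume_pi, Measure.pi_univ]
    simp
  | succ n ih =>
    set S := {p : ℝ × (Fin n → ℝ) | p.1 ∈ Set.Icc a b ∧ p.2 ∈ orderSimplex n p.1 b}
    have hS : MeasurableSet S := (isClosed_setOf_mem_orderSimplex n a b).measurableSet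
    have hslice : ∀ x, volume (Prod.mk x ⁻¹' S) =
        (Set.Icc a b).indicator (fun x => ENNReal.ofReal ((b - x) ^ n / n !)) x := by
      intro x
      by_cases hx : x ∈ Set.Icc a b
      · rw [Set.indicator_of_mem hx, ← ih hx.2]
        congr 1
        ext y
        exact and_iff_right hx
      · rw [Set.indicator_of_notMem hx,
          Set.eq_empty_of_forall_notMem (s := Prod.mk x ⁻¹' S) fun y hy => hx hy.1, measure_empty]
    calc volume (orderSimplex (n + 1) a b)
        = volume {z : Fin (n + 1) → ℝ | (z 0, Fin.tail z) ∈ S} := by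
          congr 1; ext z; exact mem_orderSimplex_succ_iff
      _ = _ := by
          rw [volume_fin_succ_eq_lintegral hS]
          simp_rw [hslice]
          rw [lintegral_indicator measurableSet_Icc, lintegral_Icc_sub_pow_div_factorial hab]

theorem Equiv.Perm.card_strictMono {α : Type*} [LinearOrder α] [Finite α] :
    Nat.card {w : Equiv.Perm α // StrictMono w} = 1 :=
  Nat.card_eq_one_iff_exists.mpr ⟨⟨1, strictMono_id⟩, fun w =>
    Subtype.ext <| Equiv.ext fun _ => w.2.apply_eq⟩

theorem ov_increasing_iff_strictMono (w : Equiv.Perm (Fin 5)) :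
    (ov w 1 < ov w 2 ∧ ov w 2 < ov w 3 ∧ ov w 3 < ov w 4 ∧ ov w 4 < ov w 5) ↔ StrictMono w := by
  simp [Fin.strictMono_iff_lt_succ, Fin.forall_fin_succ, ov]

theorem stmt18 :
    volume {z : Fin 5 → ℝ |
      (0 ≤ z 0 ∧ z 0 ≤ 1) ∧
      (0 ≤ z 1 - z 0 ∧ z 1 - z 0 ≤ 1) ∧
      (0 ≤ z 2 - z 1 ∧ z 2 - z 1 ≤ 1) ∧
      (0 ≤ z 3 - z 2 ∧ z 3 - z 2 ≤ 1) ∧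
      (0 ≤ z 4 - z 3 ∧ z 4 - z 3 ≤ 1) ∧
      (0 ≤ z 4 ∧ z 4 ≤ 1) ∧
      (0 ≤ z 3 - z 0 ∧ z 3 - z 0 ≤ 1)} = 1 / 120 ∧
    volume {z : Fin 5 → ℝ |
      (0 ≤ z 0 ∧ z 0 ≤ 1) ∧
      (0 ≤ z 1 - z 0 ∧ z 1 - z 0 ≤ 1) ∧
      (0 ≤ z 2 - z 1 ∧ z 2 - z 1 ≤ 1) ∧
      (0 ≤ z 3 - z 2 ∧ z 3 - z 2 ≤ 1) ∧
      (0 ≤ z 4 - z 3 ∧ z 4 - z 3 ≤ 1) ∧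
      (0 ≤ z 4 ∧ z 4 ≤ 1) ∧
      (0 ≤ z 3 - z 0 ∧ z 3 - z 0 ≤ 1)} =
      (Nat.card {w : Equiv.Perm (Fin 5) //
        ov w 1 < ov w 2 ∧ ov w 2 < ov w 3 ∧ ov w 3 < ov w 4 ∧ ov w 4 < ov w 5} : ℝ≥0∞) /
        (Nat.factorial 5 : ℝ≥0∞) := by
  have hP : {z : Fin 5 → ℝ |
      (0 ≤ z 0 ∧ z 0 ≤ 1) ∧
      (0 ≤ z 1 - z 0 ∧ z 1 - z 0 ≤ 1) ∧
      (0 ≤ z 2 - z 1 ∧ z 2 - z 1 ≤ 1) ∧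
      (0 ≤ z 3 - z 2 ∧ z 3 - z 2 ≤ 1) ∧
      (0 ≤ z 4 - z 3 ∧ z 4 - z 3 ≤ 1) ∧
      (0 ≤ z 4 ∧ z 4 ≤ 1) ∧
      (0 ≤ z 3 - z 0 ∧ z 3 - z 0 ≤ 1)} = orderSimplex 5 0 1 := by
    ext z
    simp only [Fin.isValue, sub_nonneg, tsub_le_iff_right, Set.mem_ofPred_eq, orderSimplex,
      Fin.monotone_iff_le_succ, Fin.forall_fin_succ, Fin.castSucc_zero, Fin.succ_zero_eq_one,
      Fin.castSucc_succ, Nat.reduceAdd, Fin.succ_one_eq_two, Fin.reduceSucc, IsEmpty.forall_iff,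
      and_true, Set.mem_Icc]
    constructor
    · rintro ⟨⟨h0, -⟩, ⟨h01, -⟩, ⟨h12, -⟩, ⟨h23, -⟩, ⟨h34, -⟩, ⟨-, h4⟩, -⟩
      refine ⟨⟨h01, h12, h23, h34⟩, ⟨h0, ?_⟩, ⟨?_, ?_⟩, ⟨?_, ?_⟩, ⟨?_, ?_⟩, ?_, h4⟩ <;> linarith
    · rintro ⟨⟨h01, h12, h23, h34⟩, ⟨h0, -⟩, -, -, -, -, h4⟩
      refine ⟨⟨h0, ?_⟩, ⟨h01, ?_⟩, ⟨h12, ?_⟩, ⟨h23, ?_⟩, ⟨h34, ?_⟩, ⟨?_, h4⟩, ?_, ?_⟩ <;> linarith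
  have hvol : volume (orderSimplex 5 0 1) = 1 / 120 := by
    rw [volume_orderSimplex 5 zero_le_one]
    norm_num [Nat.factorial, ENNReal.ofReal_div_of_pos]
  have hcard := Nat.card_congr (Equiv.subtypeEquivRight ov_increasing_iff_strictMono)
  rw [hP, hvol, hcard, Equiv.Perm.card_strictMono]
  norm_num [Nat.factorial]
end

section
/- Fix integers d ≥ 2 and 1 ≤ k ≤ d, and for each (i,j) with 0 ≤ i < j ≤ d integers b_{ij} ≤ c_{ij} (possibly b_{ij} = −∞ or c_{ij} = +∞). Let P = {(z_1,…,z_d) ∈ ℝ^d : 0 ≤ z_i − z_{i−1} ≤ 1 for 1 ≤ i ≤ d (with z_0 = 0), k−1 ≤ z_d ≤ k, and b_{ij} ≤ z_j − z_i ≤ c_{ij} for all i < j}. Let W_P be the set of w = w_1 ⋯ w_d ∈ S_d (with w_0 := 0) such that des(w) = k−1, and for each i < j: des(w_i ⋯ w_j) ≥ b_{ij} with w_i < w_j whenever equality holds, and des(w_i ⋯ w_j) ≤ c_{ij} with w_i > w_j whenever equality holds. Then the Euclidean volume of P equals |W_P|/d!. -/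
open MeasureTheory Finset ENNReal

/-!
The hyperplanes `z_j - z_i ∈ ℤ` (`0 ≤ i < j ≤ d`, `z_0 = 0`) cut `ℝ^d` into alcoves. The alcove of
a permutation `w` consists of the points whose fractional parts are ordered like the values of `w`
and whose integer parts are `⌊z_i⌋ = des(w_0 ⋯ w_i)`; it is a translate of the order simplex
`{f ∈ (0,1)^d | f_{w⁻¹(1)} < ⋯ < f_{w⁻¹(d)}}`, hence has volume `1/d!`. On the alcove of `w`,
`z_j - z_i` lies strictly between `q` and `q + 1`, where `q = des(w_i ⋯ w_j) - [w_i > w_j]`, so the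
alcove lies inside `P` when `w ∈ W_P` and is disjoint from `P` otherwise. A point of `P` off the
(null) hyperplanes lies in some alcove, since its steps `z_i - z_{i-1}` lie in `[0, 1]`: the
permutation ranking the fractional parts works, because `⌊z_i⌋ - ⌊z_{i-1}⌋` is `1` exactly at the
descents. Hence `P` is, up to a null set, the disjoint union of the alcoves of `W_P`.
-/

namespace LamPostnikov

open Equiv

variable {d : ℕ}

section OneLineNotation

variable (w : Perm (Fin d))

lemma ov_of_pos {i : ℕ} (h1 : 1 ≤ i) (h2 : i ≤ d) : ov w i = (w ⟨i - 1, by omega⟩).val + 1 :=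
  dif_pos ⟨h1, h2⟩

lemma ov_zero : ov w 0 = 0 := dif_neg (by omega)

lemma ov_ne_ov {i j : ℕ} (hij : i < j) (hjd : j ≤ d) : ov w i ≠ ov w j := by
  rw [ov_of_pos w (by omega) hjd]
  rcases Nat.eq_zero_or_pos i with rfl | hi
  · rw [ov_zero]; omega
  · rw [ov_of_pos w hi (by omega), ne_eq, Nat.add_right_cancel_iff, ← Fin.ext_iff,
      w.injective.eq_iff, Fin.mk.injEq]
    omega

lemma des_add {a b c : ℕ} (hab : a ≤ b) (hbc : b ≤ c) : des w a c = des w a b + des w b c := by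
  rw [des, ← Ico_union_Ico_eq_Ico hab hbc, filter_union,
    card_union_of_disjoint (disjoint_filter_filter (Ico_disjoint_Ico_consecutive a b c))]
  rfl

lemma des_succ (a : ℕ) : des w a (a + 1) = if ov w (a + 1) < ov w a then 1 else 0 := by
  rw [des, Nat.Ico_succ_singleton, filter_singleton]
  split_ifs <;> rfl

lemma des_zero_left (j : ℕ) : des w 0 j = des w 1 j := by
  rcases Nat.eq_zero_or_pos j with rfl | hj
  · rfl
  · have h01 : des w 0 1 = 0 := by simpa [ov_zero] using des_succ w 0
    rw [des_add w zero_le_one hj, h01, zero_add]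

end OneLineNotation

section Coordinates

lemma zcoord_of_pos (z : Fin d → ℝ) {i : ℕ} (h1 : 1 ≤ i) (h2 : i ≤ d) :
    zcoord z i = z ⟨i - 1, by omega⟩ :=
  dif_pos ⟨h1, h2⟩

@[simp]
lemma zcoord_zero (z : Fin d → ℝ) : zcoord z 0 = 0 := dif_neg (by omega)

@[simp]
lemma zcoord_succ (z : Fin d → ℝ) (a : Fin d) : zcoord z (a.val + 1) = z a :=
  zcoord_of_pos z (by omega) a.isLt

lemma zcoord_comp (z : Fin d → ℝ) (g : ℝ → ℝ) (hg : g 0 = 0) (i : ℕ) :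
    zcoord (g ∘ z) i = g (zcoord z i) := by
  unfold zcoord
  split_ifs <;> simp [hg]

noncomputable def zcoordLinear (d i : ℕ) : (Fin d → ℝ) →ₗ[ℝ] ℝ where
  toFun z := zcoord z i
  map_add' z z' := by unfold zcoord; split_ifs <;> simp
  map_smul' r z := by unfold zcoord; split_ifs <;> simp

@[simp]
lemma zcoordLinear_apply (i : ℕ) (z : Fin d → ℝ) : zcoordLinear d i z = zcoord z i := rfl

lemma zcoord_sub (z z' : Fin d → ℝ) (i : ℕ) : zcoord (z - z') i = zcoord z i - zcoord z' i :=
  (zcoordLinear d i).map_sub z z'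

end Coordinates

section Arithmetic

lemma floor_eq_floor_add_ite {u v : ℝ} (h0 : 0 ≤ v - u) (h1 : v - u < 1) :
    ⌊v⌋ = ⌊u⌋ + if Int.fract v < Int.fract u then 1 else 0 := by
  have hn : ((⌊v⌋ - ⌊u⌋ : ℤ) : ℝ) = (v - u) - (Int.fract v - Int.fract u) := by
    push_cast [Int.fract]; ring
  have hv := Int.fract_nonneg v
  have hv' := Int.fract_lt_one v
  have hu := Int.fract_nonneg u
  have hu' := Int.fract_lt_one u
  have hlo : (-1 : ℝ) < ((⌊v⌋ - ⌊u⌋ : ℤ) : ℝ) := by linarith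
  have hhi : ((⌊v⌋ - ⌊u⌋ : ℤ) : ℝ) < 2 := by linarith
  have hlo' : -1 < ⌊v⌋ - ⌊u⌋ := by exact_mod_cast hlo
  have hhi' : ⌊v⌋ - ⌊u⌋ < 2 := by exact_mod_cast hhi
  split_ifs with h
  · suffices ⌊v⌋ - ⌊u⌋ ≠ 0 by omega
    intro h0
    rw [h0, Int.cast_zero] at hn
    linarith
  · suffices ⌊v⌋ - ⌊u⌋ ≠ 1 by omega
    intro h1'
    rw [h1', Int.cast_one] at hn
    linarith

variable {r : ℝ} {q : ℤ}

lemma intCast_le_iff_of_mem_Ioo (hr : r ∈ Set.Ioo (q : ℝ) (q + 1)) (m : ℤ) :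
    (m : ℝ) ≤ r ↔ m ≤ q := by
  rw [← Int.le_floor, Int.floor_eq_iff.2 ⟨hr.1.le, hr.2⟩]

lemma le_intCast_iff_of_mem_Ioo (hr : r ∈ Set.Ioo (q : ℝ) (q + 1)) (m : ℤ) :
    r ≤ m ↔ q + 1 ≤ m := by
  rw [← Int.ceil_le, (Int.ceil_eq_iff (z := q + 1)).2 ⟨by push_cast; linarith [hr.1],
    by push_cast; exact hr.2.le⟩]

variable {D : ℤ} {p : Prop} [Decidable p]

lemma forall_intCast_le_iff (hr : r ∈ Set.Ioo ((D - if p then 1 else 0 : ℤ) : ℝ)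
      ((D - if p then 1 else 0 : ℤ) + 1)) (bb : WithBot ℤ) :
    (∀ m : ℤ, bb = m → (m : ℝ) ≤ r) ↔ bb ≤ D ∧ (bb = D → ¬p) := by
  induction bb using WithBot.recBotCoe with
  | bot => simp
  | coe m =>
    simp only [WithBot.coe_inj, forall_eq', intCast_le_iff_of_mem_Ioo hr, WithBot.coe_le_coe]
    split_ifs with hp <;> simp only [hp, not_true_eq_false, not_false_eq_true, imp_false,
      imp_true_iff, and_true] <;> omega

lemma forall_le_intCast_iff (hr : r ∈ Set.Ioo ((D - if p then 1 else 0 : ℤ) : ℝ)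
      ((D - if p then 1 else 0 : ℤ) + 1)) (cc : WithTop ℤ) :
    (∀ m : ℤ, cc = m → r ≤ m) ↔ (D : WithTop ℤ) ≤ cc ∧ (cc = D → p) := by
  induction cc using WithTop.recTopCoe with
  | top => simp
  | coe m =>
    simp only [WithTop.coe_inj, forall_eq', le_intCast_iff_of_mem_Ioo hr, WithTop.coe_le_coe]
    split_ifs with hp <;> simp only [hp, imp_false, imp_true_iff, and_true] <;> omega

end Arithmetic

lemma measure_setOf_linearMap_eq {E : Type*} [NormedAddCommGroup E] [NormedSpace ℝ E]
    [MeasurableSpace E] [BorelSpace E] [FiniteDimensional ℝ E] (μ : Measure E)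
    [μ.IsAddHaarMeasure] {L : E →ₗ[ℝ] ℝ} (hL : L ≠ 0) (r : ℝ) : μ {x | L x = r} = 0 := by
  rcases Set.eq_empty_or_nonempty {x | L x = r} with h | ⟨x₀, hx₀⟩
  · rw [h, measure_empty]
  have : {x | L x = r} = (· + -x₀) ⁻¹' (LinearMap.ker L : Set E) := by
    ext x
    simp [← hx₀.out, sub_eq_zero, ← sub_eq_add_neg]
  rw [this, measure_preimage_add_right]
  exact Measure.addHaar_submodule μ _ (fun h => hL (LinearMap.ker_eq_top.1 h))

section Walls

def walls (d : ℕ) : Set (Fin d → ℝ) :=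
  {z | ∃ i j, i < j ∧ j ≤ d ∧ ∃ m : ℤ, zcoord z j - zcoord z i = m}

lemma volume_walls : volume (walls d) = 0 := by
  have hsub : walls d ⊆ ⋃ (i : ℕ) (j : ℕ) (_ : i < j) (_ : j ≤ d) (m : ℤ),
      {z | (zcoordLinear d j - zcoordLinear d i) z = m} := by
    rintro z ⟨i, j, hij, hjd, m, hm⟩
    simp only [Set.mem_iUnion]
    exact ⟨i, j, hij, hjd, m, hm⟩
  refine measure_mono_null hsub <| measure_iUnion_null fun i => measure_iUnion_null fun j =>
    measure_iUnion_null fun hij => measure_iUnion_null fun hjd => measure_iUnion_null fun m =>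
      measure_setOf_linearMap_eq _ (fun hL => ?_) _
  have := LinearMap.congr_fun hL (Pi.single ⟨j - 1, by omega⟩ 1)
  simp only [LinearMap.sub_apply, zcoordLinear_apply, LinearMap.zero_apply] at this
  rw [zcoord_of_pos _ (by omega) hjd, Pi.single_eq_same] at this
  rcases Nat.eq_zero_or_pos i with rfl | hi
  · simp at this
  · rw [zcoord_of_pos _ hi (by omega), Pi.single_eq_of_ne (by rw [ne_eq, Fin.mk.injEq]; omega)] at this
    simp at this

variable {z : Fin d → ℝ}

lemma coord_ne_intCast (hz : z ∉ walls d) (a : Fin d) (m : ℤ) : z a ≠ m :=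
  fun he => hz ⟨0, a + 1, a.val.succ_pos, a.isLt, m, by simpa using he⟩

lemma coord_sub_coord_ne_intCast (hz : z ∉ walls d) {a b : Fin d} (hab : a ≠ b) (m : ℤ) :
    z a - z b ≠ m := by
  intro he
  rcases lt_or_gt_of_ne hab with h | h
  · exact hz ⟨a + 1, b + 1, by simpa using h, b.isLt, -m, by
      rw [zcoord_succ, zcoord_succ]; push_cast; linarith⟩
  · exact hz ⟨b + 1, a + 1, by simpa using h, a.isLt, m, by simpa using he⟩

lemma injective_of_notMem_walls (hz : z ∉ walls d) : Function.Injective z := by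
  intro a b hab
  by_contra hne
  exact coord_sub_coord_ne_intCast hz hne 0 (by simp [hab])

end Walls

section OrderCell

def orderCell (w : Perm (Fin d)) : Set (Fin d → ℝ) :=
  {f | (∀ a, f a ∈ Set.Ioo 0 1) ∧ StrictMono (f ∘ w.symm)}

variable {w : Perm (Fin d)} {f : Fin d → ℝ}

lemma lt_iff_of_mem_orderCell (hf : f ∈ orderCell w) (a b : Fin d) : f a < f b ↔ w a < w b := by
  simpa using hf.2.lt_iff_lt (a := w a) (b := w b)

lemma exists_mem_orderCell (hinj : Function.Injective f) (h01 : ∀ a, f a ∈ Set.Ioo 0 1) :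
    ∃ w, f ∈ orderCell w :=
  ⟨(Tuple.sort f).symm, h01,
    (Tuple.monotone_sort f).strictMono_of_injective (hinj.comp (Tuple.sort f).injective)⟩

lemma orderCell_disjoint {w w' : Perm (Fin d)} (hne : w ≠ w') :
    Disjoint (orderCell w) (orderCell w') := by
  refine Set.disjoint_left.2 fun f hf hf' => hne ?_
  have sort_eq {v : Perm (Fin d)} (hv : StrictMono (f ∘ v.symm)) : v.symm = Tuple.sort f :=
    Tuple.eq_sort_iff.2 ⟨hv.monotone, fun i j hij he => absurd he (hv hij).ne⟩
  exact symm_bijective.injective ((sort_eq hf.2).trans (sort_eq hf'.2).symm)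

lemma measurableSet_orderCell (w : Perm (Fin d)) : MeasurableSet (orderCell w) := by
  have : orderCell w = (⋂ a, (fun f => f a) ⁻¹' Set.Ioo 0 1) ∩
      ⋂ (i) (j) (_ : i < j), {f | f (w.symm i) < f (w.symm j)} := by
    ext f
    simp [orderCell, StrictMono]
  rw [this]
  exact .inter (.iInter fun a => measurableSet_Ioo.preimage (measurable_pi_apply a))
    (.iInter fun i => .iInter fun j => .iInter fun _ =>
      measurableSet_lt (measurable_pi_apply _) (measurable_pi_apply _))

lemma preimage_comp_orderCell (σ v : Perm (Fin d)) :
    (fun f : Fin d → ℝ => f ∘ σ) ⁻¹' orderCell v = orderCell (v * σ⁻¹) := by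
  ext f
  exact and_congr (σ.forall_congr_right (q := fun a => f a ∈ Set.Ioo 0 1)) Iff.rfl

lemma volume_orderCell_eq (w w' : Perm (Fin d)) : volume (orderCell w) = volume (orderCell w') := by
  have hσ := volume_preserving_arrowCongr' (w⁻¹ * w').symm (MeasurableEquiv.refl ℝ)
    (MeasurePreserving.id volume)
  have : orderCell w = (fun f : Fin d → ℝ => f ∘ (w⁻¹ * w')) ⁻¹' orderCell w' := by
    rw [preimage_comp_orderCell]
    group
  rw [this]
  exact hσ.measure_preimage (measurableSet_orderCell w').nullMeasurableSet

lemma volume_orderCell (w : Perm (Fin d)) : volume (orderCell w) = (d.factorial : ℝ≥0∞)⁻¹ := by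
  let cube := Set.univ.pi fun _ : Fin d => Set.Ioo (0 : ℝ) 1
  have hcube : volume cube = 1 := by simp [cube, volume_pi_pi]
  have hsub : cube \ ⋃ v, orderCell v ⊆ walls d := by
    rintro f ⟨hf, hnot⟩
    by_contra hw
    obtain ⟨v, hv⟩ := exists_mem_orderCell (injective_of_notMem_walls hw) (fun a => hf a trivial)
    exact hnot (Set.mem_iUnion.2 ⟨v, hv⟩)
  have hsup : ⋃ v, orderCell v ⊆ cube :=
    Set.iUnion_subset fun v f hf a _ => hf.1 a
  refine ENNReal.eq_inv_of_mul_eq_one_left ?_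
  calc volume (orderCell w) * d.factorial = ∑ v, volume (orderCell v) := by
        rw [sum_congr rfl fun v _ => volume_orderCell_eq v w, sum_const, card_univ,
          Fintype.card_perm, Fintype.card_fin, nsmul_eq_mul, mul_comm]
    _ = volume (⋃ v, orderCell v) := by
        rw [measure_iUnion (fun v v' h => orderCell_disjoint h) measurableSet_orderCell,
          tsum_fintype]
    _ = 1 := by
        rw [measure_eq_measure_of_null_sdiff hsup (measure_mono_null hsub volume_walls), hcube]

end OrderCell

section Alcove

variable (w : Perm (Fin d))

noncomputable def alcoveShift : Fin d → ℝ := fun a => des w 0 (a.val + 1)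

noncomputable def alcove : Set (Fin d → ℝ) := (· - alcoveShift w) ⁻¹' orderCell w

lemma zcoord_alcoveShift {ℓ : ℕ} (hℓ : ℓ ≤ d) : zcoord (alcoveShift w) ℓ = des w 0 ℓ := by
  rcases Nat.eq_zero_or_pos ℓ with rfl | h
  · simp [des]
  · rw [zcoord_of_pos _ h hℓ, alcoveShift, Nat.sub_add_cancel h]

lemma measurableSet_alcove : MeasurableSet (alcove w) :=
  (measurableSet_orderCell w).preimage (measurable_id.sub_const _)

lemma volume_alcove : volume (alcove w) = (d.factorial : ℝ≥0∞)⁻¹ := by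
  have : alcove w = (· + -alcoveShift w) ⁻¹' orderCell w := by
    ext z
    simp [alcove, sub_eq_add_neg]
  rw [this, measure_preimage_add_right, volume_orderCell]

variable {w} {f z : Fin d → ℝ}

lemma zcoord_mem_Ico (hf : f ∈ orderCell w) (i : ℕ) : zcoord f i ∈ Set.Ico 0 1 := by
  unfold zcoord
  split_ifs
  · exact ⟨(hf.1 _).1.le, (hf.1 _).2⟩
  · simp

lemma zcoord_lt_zcoord_iff (hf : f ∈ orderCell w) {i j : ℕ} (hi : i ≤ d) (hj : j ≤ d) :
    zcoord f i < zcoord f j ↔ ov w i < ov w j := by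
  rcases Nat.eq_zero_or_pos i with rfl | hi0 <;> rcases Nat.eq_zero_or_pos j with rfl | hj0
  · simp
  · simp [zcoord_of_pos f hj0 hj, ov_zero, ov_of_pos w hj0 hj, (hf.1 _).1]
  · simp [zcoord_of_pos f hi0 hi, ov_zero, ov_of_pos w hi0 hi, (hf.1 _).1.le]
  · rw [zcoord_of_pos f hi0 hi, zcoord_of_pos f hj0 hj, ov_of_pos w hi0 hi, ov_of_pos w hj0 hj,
      lt_iff_of_mem_orderCell hf, Fin.lt_def, Nat.add_lt_add_iff_right]

lemma zcoord_sub_zcoord_mem_Ioo (hz : z ∈ alcove w) {i j : ℕ} (hij : i < j) (hjd : j ≤ d) :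
    zcoord z j - zcoord z i ∈ Set.Ioo ((des w i j - if ov w j < ov w i then 1 else 0 : ℤ) : ℝ)
      ((des w i j - if ov w j < ov w i then 1 else 0 : ℤ) + 1) := by
  set f := z - alcoveShift w
  have hzf {ℓ : ℕ} (hℓ : ℓ ≤ d) : zcoord z ℓ = zcoord f ℓ + des w 0 ℓ := by
    rw [zcoord_sub, zcoord_alcoveShift w hℓ]; ring
  rw [hzf hjd, hzf (by omega), des_add w (Nat.zero_le i) hij.le]
  obtain ⟨hfi, hfi'⟩ := zcoord_mem_Ico hz i
  obtain ⟨hfj, hfj'⟩ := zcoord_mem_Ico hz j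
  split_ifs with h
  · have := (zcoord_lt_zcoord_iff hz hjd (by omega)).2 h
    push_cast
    constructor <;> linarith
  · have := (zcoord_lt_zcoord_iff hz (by omega) hjd).2
      ((ov_ne_ov w hij hjd).lt_or_gt.resolve_right h)
    push_cast
    constructor <;> linarith

lemma alcoveShift_eq_floor (hz : z ∈ alcove w) (a : Fin d) : alcoveShift w a = ⌊z a⌋ := by
  obtain ⟨h0, h1⟩ := hz.1 a
  simp only [Pi.sub_apply, alcoveShift] at h0 h1
  have : ⌊z a⌋ = (des w 0 (a.val + 1) : ℤ) :=
    Int.floor_eq_iff.2 (by push_cast; constructor <;> linarith)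
  rw [this]
  rfl

lemma alcove_disjoint {w w' : Perm (Fin d)} (hne : w ≠ w') : Disjoint (alcove w) (alcove w') := by
  refine Set.disjoint_left.2 fun z hz hz' => (orderCell_disjoint hne).ne_of_mem hz ?_ rfl
  have : alcoveShift w = alcoveShift w' :=
    funext fun a => (alcoveShift_eq_floor hz a).trans (alcoveShift_eq_floor hz' a).symm
  exact this ▸ hz'

lemma exists_mem_alcove (hz : z ∉ walls d) (hstep : ∀ ℓ, 1 ≤ ℓ → ℓ ≤ d →
      0 ≤ zcoord z ℓ - zcoord z (ℓ - 1) ∧ zcoord z ℓ - zcoord z (ℓ - 1) ≤ 1) :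
    ∃ w, z ∈ alcove w := by
  set g : Fin d → ℝ := Int.fract ∘ z
  have hginj : Function.Injective g := by
    intro a b hab
    by_contra hne
    obtain ⟨m, hm⟩ := Int.fract_eq_fract.1 hab
    exact coord_sub_coord_ne_intCast hz hne m hm
  have hg01 (a : Fin d) : g a ∈ Set.Ioo 0 1 :=
    ⟨Int.fract_pos.2 (coord_ne_intCast hz a _), Int.fract_lt_one _⟩
  obtain ⟨w, hw⟩ := exists_mem_orderCell hginj hg01
  have hfloor (ℓ : ℕ) (hℓ : ℓ ≤ d) : ⌊zcoord z ℓ⌋ = des w 0 ℓ := by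
    induction ℓ with
    | zero => simp [des]
    | succ ℓ ih =>
      obtain ⟨h0, h1⟩ := hstep (ℓ + 1) (by omega) hℓ
      rw [Nat.add_sub_cancel] at h0 h1
      have hne : zcoord z (ℓ + 1) - zcoord z ℓ ≠ 1 :=
        fun he => hz ⟨ℓ, ℓ + 1, ℓ.lt_succ_self, hℓ, 1, by simpa using he⟩
      have hfract : Int.fract (zcoord z (ℓ + 1)) < Int.fract (zcoord z ℓ) ↔
          ov w (ℓ + 1) < ov w ℓ := by
        rw [← zcoord_comp z _ Int.fract_zero, ← zcoord_comp z _ Int.fract_zero]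
        exact zcoord_lt_zcoord_iff hw hℓ (by omega)
      rw [floor_eq_floor_add_ite h0 (h1.lt_of_ne hne), ih (by omega),
        des_add w (Nat.zero_le ℓ) ℓ.le_succ, des_succ]
      by_cases h : ov w (ℓ + 1) < ov w ℓ <;> simp [h, hfract]
  refine ⟨w, ?_⟩
  have hshift : z - alcoveShift w = g := by
    funext a
    have := hfloor (a + 1) a.isLt
    rw [zcoord_succ] at this
    rw [Pi.sub_apply, show g a = Int.fract (z a) from rfl, ← Int.self_sub_floor, this,
      Int.cast_natCast]
    rfl
  show z - alcoveShift w ∈ orderCell w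
  rwa [hshift]

end Alcove

section Polytope

variable {w : Perm (Fin d)} {z : Fin d → ℝ}

lemma zcoord_sub_zcoord_pred_mem_Ioo (hz : z ∈ alcove w) {ℓ : ℕ} (h1 : 1 ≤ ℓ) (h2 : ℓ ≤ d) :
    zcoord z ℓ - zcoord z (ℓ - 1) ∈ Set.Ioo 0 1 := by
  have hr := zcoord_sub_zcoord_mem_Ioo hz (show ℓ - 1 < ℓ by omega) h2
  have hdes := des_succ w (ℓ - 1)
  rw [Nat.sub_add_cancel h1] at hdes
  rw [hdes] at hr
  split_ifs at hr <;> simpa using hr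

lemma zcoord_mem_Ioo (hz : z ∈ alcove w) {ℓ : ℕ} (h1 : 1 ≤ ℓ) (h2 : ℓ ≤ d) :
    zcoord z ℓ ∈ Set.Ioo ((des w 1 ℓ : ℤ) : ℝ) ((des w 1 ℓ : ℤ) + 1) := by
  simpa [ov_zero, des_zero_left] using zcoord_sub_zcoord_mem_Ioo hz (show 0 < ℓ by omega) h2

variable (k : ℕ) (b : ℕ → ℕ → WithBot ℤ) (c : ℕ → ℕ → WithTop ℤ)

-- `alcovedPolytope k b c` is the polytope `P`, and `IsAdmissible k b c` cuts out `W_P`.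
def alcovedPolytope : Set (Fin d → ℝ) :=
  {z | (∀ i, 1 ≤ i → i ≤ d →
        0 ≤ zcoord z i - zcoord z (i - 1) ∧ zcoord z i - zcoord z (i - 1) ≤ 1) ∧
      ((k : ℝ) - 1 ≤ zcoord z d ∧ zcoord z d ≤ (k : ℝ)) ∧
      (∀ i j, i < j → j ≤ d →
        (∀ m : ℤ, b i j = (m : WithBot ℤ) → (m : ℝ) ≤ zcoord z j - zcoord z i) ∧
        (∀ m : ℤ, c i j = (m : WithTop ℤ) → zcoord z j - zcoord z i ≤ (m : ℝ)))}

def IsAdmissible (w : Perm (Fin d)) : Prop :=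
  des w 1 d = k - 1 ∧
    ∀ i j, i < j → j ≤ d →
      (b i j ≤ ((des w i j : ℤ) : WithBot ℤ) ∧
        (b i j = ((des w i j : ℤ) : WithBot ℤ) → ov w i < ov w j)) ∧
      (((des w i j : ℤ) : WithTop ℤ) ≤ c i j ∧
        (c i j = ((des w i j : ℤ) : WithTop ℤ) → ov w j < ov w i))

variable {k b c}

lemma mem_alcovedPolytope_iff (hd : 1 ≤ d) (hk : 1 ≤ k) (hz : z ∈ alcove w) :
    z ∈ alcovedPolytope k b c ↔ IsAdmissible k b c w := by
  have hsteps (ℓ : ℕ) (h1 : 1 ≤ ℓ) (h2 : ℓ ≤ d) :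
      0 ≤ zcoord z ℓ - zcoord z (ℓ - 1) ∧ zcoord z ℓ - zcoord z (ℓ - 1) ≤ 1 :=
    have h := zcoord_sub_zcoord_pred_mem_Ioo hz h1 h2
    ⟨h.1.le, h.2.le⟩
  have hlast : ((k : ℝ) - 1 ≤ zcoord z d ∧ zcoord z d ≤ k) ↔ des w 1 d = k - 1 := by
    have hr := zcoord_mem_Ioo hz hd le_rfl
    have e1 := intCast_le_iff_of_mem_Ioo hr (k - 1 : ℤ)
    have e2 := le_intCast_iff_of_mem_Ioo hr k
    push_cast at e1 e2
    rw [e1, e2]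
    omega
  have hbounds (i j : ℕ) (hij : i < j) (hjd : j ≤ d) :
      ((∀ m : ℤ, b i j = m → (m : ℝ) ≤ zcoord z j - zcoord z i) ∧
        (∀ m : ℤ, c i j = m → zcoord z j - zcoord z i ≤ m)) ↔
      ((b i j ≤ ((des w i j : ℤ) : WithBot ℤ) ∧
          (b i j = ((des w i j : ℤ) : WithBot ℤ) → ov w i < ov w j)) ∧
        (((des w i j : ℤ) : WithTop ℤ) ≤ c i j ∧
          (c i j = ((des w i j : ℤ) : WithTop ℤ) → ov w j < ov w i))) := by
    have hr := zcoord_sub_zcoord_mem_Ioo hz hij hjd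
    have hov : ¬ ov w j < ov w i ↔ ov w i < ov w j :=
      ⟨(ov_ne_ov w hij hjd).lt_or_gt.resolve_right, fun h => h.asymm⟩
    rw [forall_intCast_le_iff hr, forall_le_intCast_iff hr, hov]
  exact (and_iff_right hsteps).trans (and_congr hlast (forall₄_congr hbounds))

end Polytope

end LamPostnikov

theorem stmt19_general (d k : ℕ) (hd : 2 ≤ d) (hk1 : 1 ≤ k)
    (b : ℕ → ℕ → WithBot ℤ) (c : ℕ → ℕ → WithTop ℤ) :
    volume {z : Fin d → ℝ |
      (∀ i, 1 ≤ i → i ≤ d →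
        0 ≤ zcoord z i - zcoord z (i - 1) ∧ zcoord z i - zcoord z (i - 1) ≤ 1) ∧
      ((k : ℝ) - 1 ≤ zcoord z d ∧ zcoord z d ≤ (k : ℝ)) ∧
      (∀ i j, i < j → j ≤ d →
        (∀ m : ℤ, b i j = (m : WithBot ℤ) → (m : ℝ) ≤ zcoord z j - zcoord z i) ∧
        (∀ m : ℤ, c i j = (m : WithTop ℤ) → zcoord z j - zcoord z i ≤ (m : ℝ)))} =
    (Nat.card {w : Equiv.Perm (Fin d) //
        des w 1 d = k - 1 ∧
        ∀ i j, i < j → j ≤ d →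
          (b i j ≤ ((des w i j : ℤ) : WithBot ℤ) ∧
            (b i j = ((des w i j : ℤ) : WithBot ℤ) → ov w i < ov w j)) ∧
          (((des w i j : ℤ) : WithTop ℤ) ≤ c i j ∧
            (c i j = ((des w i j : ℤ) : WithTop ℤ) → ov w j < ov w i))} : ℝ≥0∞) /
      (Nat.factorial d : ℝ≥0∞) := by
  open LamPostnikov in
  classical
  change volume (alcovedPolytope k b c) =
    (Nat.card {w // IsAdmissible k b c w} : ℝ≥0∞) / d.factorial
  have hmem {w : Equiv.Perm (Fin d)} {z : Fin d → ℝ} (hz : z ∈ alcove w) :=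
    mem_alcovedPolytope_iff (b := b) (c := c) (by omega) hk1 hz
  let W := univ.filter (IsAdmissible (d := d) k b c)
  have hsub : ⋃ w ∈ W, alcove w ⊆ alcovedPolytope k b c :=
    Set.iUnion₂_subset fun w hw z hz => (hmem hz).2 (mem_filter.1 hw).2
  have hwalls : alcovedPolytope k b c \ ⋃ w ∈ W, alcove w ⊆ walls d := by
    rintro z ⟨hzP, hzU⟩
    by_contra hzw
    obtain ⟨w, hw⟩ := exists_mem_alcove hzw hzP.1
    exact hzU (Set.mem_biUnion (mem_filter.2 ⟨mem_univ w, (hmem hw).1 hzP⟩) hw)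
  rw [← measure_eq_measure_of_null_sdiff hsub (measure_mono_null hwalls volume_walls),
    measure_biUnion_finset (fun w _ w' _ => alcove_disjoint) (fun w _ => measurableSet_alcove w),
    sum_congr rfl fun w _ => volume_alcove w, sum_const, nsmul_eq_mul, Nat.card_eq_fintype_card,
    Fintype.card_subtype, div_eq_mul_inv]

theorem stmt19 (d k : ℕ) (hd : 2 ≤ d) (hk1 : 1 ≤ k) (hkd : k ≤ d)
    (b : ℕ → ℕ → WithBot ℤ) (c : ℕ → ℕ → WithTop ℤ)
    (hbc : ∀ i j, i < j → j ≤ d → ∀ m m' : ℤ,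
      b i j = (m : WithBot ℤ) → c i j = (m' : WithTop ℤ) → m ≤ m') :
    volume {z : Fin d → ℝ |
      (∀ i, 1 ≤ i → i ≤ d →
        0 ≤ zcoord z i - zcoord z (i - 1) ∧ zcoord z i - zcoord z (i - 1) ≤ 1) ∧
      ((k : ℝ) - 1 ≤ zcoord z d ∧ zcoord z d ≤ (k : ℝ)) ∧
      (∀ i j, i < j → j ≤ d →
        (∀ m : ℤ, b i j = (m : WithBot ℤ) → (m : ℝ) ≤ zcoord z j - zcoord z i) ∧
        (∀ m : ℤ, c i j = (m : WithTop ℤ) → zcoord z j - zcoord z i ≤ (m : ℝ)))} =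
    (Nat.card {w : Equiv.Perm (Fin d) //
        des w 1 d = k - 1 ∧
        ∀ i j, i < j → j ≤ d →
          (b i j ≤ ((des w i j : ℤ) : WithBot ℤ) ∧
            (b i j = ((des w i j : ℤ) : WithBot ℤ) → ov w i < ov w j)) ∧
          (((des w i j : ℤ) : WithTop ℤ) ≤ c i j ∧
            (c i j = ((des w i j : ℤ) : WithTop ℤ) → ov w j < ov w i))} : ℝ≥0∞) /
      (Nat.factorial d : ℝ≥0∞) :=
  stmt19_general d k hd hk1 b c
end
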